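/- arXiv:1409.6812 — 6 statements merged into one kernel-verified Lean document; each statement's English description precedes it below -/
import Mathlib

section
/- Every graph G with chromatic number χ(G) = Δ(G) + 1 ≥ 4 contains a clique on Δ(G) + 1 vertices (Brooks' Theorem, contrapositive form). -/
open SimpleGraph

/-!
Induction on the number of vertices, over all graphs at once (it is also applied to a graph with
an added edge), inside a vertex set `s` in which every vertex has at most `k ≥ 3` neighbours and
there is no `K_{k+1}`. A vertex with fewer than `k` neighbours is coloured last, so `s` may be
assumed `k`-regular. Given a separation `(A, B)` of `s`, colourings of `A` and `B` glue after
permuting colours if `A ∩ B` has at most one vertex, or if `A ∩ B = {x, y}` and `x`, `y` are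
coloured alike on both sides or differently on both sides. In the latter case, without smaller
separators each of `x`, `y` has neighbours strictly on both sides, so adding the edge `xy` keeps
degrees within a side at most `k`, and induction colours both sides with `x`, `y` distinct. If the
edge `xy` completes a `K_{k+1}` on one side, then on that side `y` has the same `k - 1` neighbours
as `x`, and on the other side each of `x`, `y` has only one neighbour, so both sides can be
coloured with `x`, `y` sharing a colour. Finally, without separators of at most two vertices, `s`
is not a clique, so it contains an induced path `a b c`; colour `a` and `c` alike and the rest
greedily towards `b`, which sees a repeated colour.
-/

open Finset

namespace SimpleGraph

open scoped Classical

variable {V α : Type*} {H : SimpleGraph V} {s t A B T : Finset V} {v x y : V} {k : ℕ}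

noncomputable def neighborsIn (H : SimpleGraph V) (s : Finset V) (v : V) : Finset V :=
  {w ∈ s | H.Adj v w}

@[simp] lemma mem_neighborsIn {w : V} : w ∈ H.neighborsIn s v ↔ w ∈ s ∧ H.Adj v w :=
  mem_filter

lemma neighborsIn_mono (h : s ⊆ t) : H.neighborsIn s v ⊆ H.neighborsIn t v :=
  filter_subset_filter _ h

lemma neighborsIn_union : H.neighborsIn (s ∪ t) v = H.neighborsIn s v ∪ H.neighborsIn t v :=
  filter_union _ _ _

lemma card_neighborsIn_union (h : Disjoint s t) :
    #(H.neighborsIn (s ∪ t) v) = #(H.neighborsIn s v) + #(H.neighborsIn t v) := by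
  rw [neighborsIn_union]
  exact card_union_of_disjoint (disjoint_filter_filter h)

lemma card_neighborsIn_lt {w : V} (hst : s ⊆ t) (hwt : w ∈ t) (hws : w ∉ s) (hvw : H.Adj v w) :
    #(H.neighborsIn s v) < #(H.neighborsIn t v) :=
  card_lt_card <| (ssubset_iff_of_subset (neighborsIn_mono hst)).2
    ⟨w, mem_neighborsIn.2 ⟨hwt, hvw⟩, fun h => hws (mem_neighborsIn.1 h).1⟩

lemma card_neighborsIn_univ [Fintype V] [DecidableRel H.Adj] :
    #(H.neighborsIn univ v) = H.degree v := by
  rw [← card_neighborFinset_eq_degree]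
  congr 1
  ext w
  simp

def DegreeLEOn (H : SimpleGraph V) (s : Finset V) (k : ℕ) : Prop :=
  ∀ v ∈ s, #(H.neighborsIn s v) ≤ k

lemma DegreeLEOn.mono (h : H.DegreeLEOn s k) (hts : t ⊆ s) : H.DegreeLEOn t k :=
  fun v hv => (card_le_card (neighborsIn_mono hts)).trans (h v (hts hv))

lemma DegreeLEOn.sup_edge (h : H.DegreeLEOn s k) (hx : #(H.neighborsIn s x) < k)
    (hy : #(H.neighborsIn s y) < k) : (H ⊔ edge x y).DegreeLEOn s k := by
  intro v hv
  rcases eq_or_ne v x with rfl | hvx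
  · refine (card_le_card (t := insert y (H.neighborsIn s v)) fun w => ?_).trans
      ((card_insert_le _ _).trans hx)
    simp only [mem_neighborsIn, sup_adj, edge_adj, mem_insert]
    tauto
  rcases eq_or_ne v y with rfl | hvy
  · refine (card_le_card (t := insert x (H.neighborsIn s v)) fun w => ?_).trans
      ((card_insert_le _ _).trans hy)
    simp only [mem_neighborsIn, sup_adj, edge_adj, mem_insert]
    tauto
  · refine (card_le_card (t := H.neighborsIn s v) fun w => ?_).trans (h v hv)
    simp [edge_adj, hvx, hvy]

def IsColoringOn (H : SimpleGraph V) (c : V → α) (s : Finset V) : Prop :=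
  ∀ u ∈ s, ∀ w ∈ s, H.Adj u w → c u ≠ c w

def ColorableOn (H : SimpleGraph V) (k : ℕ) (s : Finset V) : Prop :=
  ∃ c : V → Fin k, H.IsColoringOn c s

lemma colorableOn_univ_iff [Fintype V] : H.ColorableOn k univ ↔ H.Colorable k :=
  ⟨fun ⟨c, hc⟩ => ⟨Coloring.mk c fun h => hc _ (mem_univ _) _ (mem_univ _) h⟩,
    fun ⟨C⟩ => ⟨C, fun _ _ _ _ h => C.valid h⟩⟩

namespace IsColoringOn

variable {β : Type*} {c c₁ c₂ : V → α}

lemma comp_injective (hc : H.IsColoringOn c s) {f : α → β} (hf : Function.Injective f) :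
    H.IsColoringOn (f ∘ c) s :=
  fun u hu w hw huw h => hc u hu w hw huw (hf h)

lemma of_sup_edge (hc : (H ⊔ edge x y).IsColoringOn c s) (hx : x ∈ s) (hy : y ∈ s)
    (hxy : x ≠ y) : H.IsColoringOn c s ∧ c x ≠ c y :=
  ⟨fun u hu w hw huw => hc u hu w hw (Or.inl huw),
    hc x hx y hy (Or.inr ((edge_adj ..).2 ⟨Or.inl ⟨rfl, rfl⟩, hxy⟩))⟩

lemma piecewise (h₁ : H.IsColoringOn c₁ A) (h₂ : H.IsColoringOn c₂ B)
    (hagree : ∀ x ∈ A ∩ B, c₁ x = c₂ x) (hnadj : ∀ u ∈ A \ B, ∀ w ∈ B \ A, ¬ H.Adj u w) :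
    H.IsColoringOn (A.piecewise c₁ c₂) (A ∪ B) := by
  have hcross : ∀ u ∈ A, ∀ w ∈ B, w ∉ A → H.Adj u w → c₁ u ≠ c₂ w := by
    intro u hu w hw hwA huw
    by_cases huB : u ∈ B
    · rw [hagree u (mem_inter.2 ⟨hu, huB⟩)]
      exact h₂ u huB w hw huw
    · exact absurd huw (hnadj u (mem_sdiff.2 ⟨hu, huB⟩) w (mem_sdiff.2 ⟨hw, hwA⟩))
  intro u hu w hw huw
  rw [mem_union] at hu hw
  by_cases huA : u ∈ A <;> by_cases hwA : w ∈ A <;>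
    simp only [piecewise_eq_of_mem, piecewise_eq_of_notMem, huA, hwA, not_false_eq_true]
  · exact h₁ u huA w hwA huw
  · exact hcross u huA w (hw.resolve_left hwA) hwA huw
  · exact (hcross w hwA u (hu.resolve_left huA) huA huw.symm).symm
  · exact h₂ u (hu.resolve_left huA) w (hw.resolve_left hwA) huw

lemma update_insert (hc : H.IsColoringOn c s) {b : α} (hb : ∀ w ∈ s, H.Adj v w → c w ≠ b) :
    H.IsColoringOn (Function.update c v b) (insert v s) := by
  intro u hu w hw huw
  rw [mem_insert] at hu hw
  rcases eq_or_ne u v with rfl | hu'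
  · have hw' : w ≠ u := huw.ne.symm
    rw [Function.update_self, Function.update_of_ne hw']
    exact (hb w (hw.resolve_left hw') huw).symm
  · rcases eq_or_ne w v with rfl | hw'
    · rw [Function.update_self, Function.update_of_ne hu']
      exact hb u (hu.resolve_left hu') huw.symm
    · rw [Function.update_of_ne hu', Function.update_of_ne hw']
      exact hc u (hu.resolve_left hu') w (hw.resolve_left hw') huw

lemma update_insert_of_neighborsIn_subset (hc : H.IsColoringOn c s) (hx : x ∈ s)
    (hN : H.neighborsIn s y ⊆ H.neighborsIn s x) :
    H.IsColoringOn (Function.update c y (c x)) (insert y s) :=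
  hc.update_insert fun w hw hyw =>
    (hc x hx w hw (mem_neighborsIn.1 (hN (mem_neighborsIn.2 ⟨hw, hyw⟩))).2).symm

lemma exists_update {c : V → Fin k} (hc : H.IsColoringOn c s)
    (hv : #((H.neighborsIn s v).image c) < k) :
    ∃ b : Fin k, H.IsColoringOn (Function.update c v b) (insert v s) := by
  obtain ⟨b, -, hb⟩ := exists_mem_notMem_of_card_lt_card
    (s := (H.neighborsIn s v).image c) (t := univ) (by rwa [card_univ, Fintype.card_fin])
  exact ⟨b, hc.update_insert fun w hw hvw hcb =>
    hb (hcb ▸ mem_image_of_mem c (mem_neighborsIn.2 ⟨hw, hvw⟩))⟩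

lemma exists_update_pair {c : V → Fin k} (hc : H.IsColoringOn c s) (hxy : ¬ H.Adj x y)
    (hlt : #(H.neighborsIn s x) + #(H.neighborsIn s y) < k) :
    ∃ b : Fin k, H.IsColoringOn (Function.update (Function.update c x b) y b)
      (insert y (insert x s)) := by
  obtain ⟨b, -, hb⟩ := exists_mem_notMem_of_card_lt_card
    (s := (H.neighborsIn s x ∪ H.neighborsIn s y).image c) (t := univ) <| by
    rw [card_univ, Fintype.card_fin]
    exact card_image_le.trans_lt ((card_union_le _ _).trans_lt hlt)
  refine ⟨b, (hc.update_insert fun w hw hxw hcw => ?_).update_insert fun w hw hyw => ?_⟩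
  · exact hb (hcw ▸ mem_image_of_mem c (mem_union_left _ (mem_neighborsIn.2 ⟨hw, hxw⟩)))
  · have hwx : w ≠ x := by rintro rfl; exact hxy hyw.symm
    rw [Function.update_of_ne hwx]
    exact fun hcw => hb (hcw ▸ mem_image_of_mem c
      (mem_union_right _ (mem_neighborsIn.2 ⟨(mem_insert.1 hw).resolve_left hwx, hyw⟩)))

theorem exists_extend {P : Finset V} {c₀ : V → Fin k} (hc₀ : H.IsColoringOn c₀ P)
    (hdisj : Disjoint P s)
    (hdegen : ∀ T ⊆ s, T.Nonempty →
      ∃ v ∈ T, #(H.neighborsIn T v) + #((H.neighborsIn P v).image c₀) < k) :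
    ∃ c : V → Fin k, H.IsColoringOn c (P ∪ s) ∧ ∀ x ∈ P, c x = c₀ x := by
  induction s using Finset.strongInduction with
  | H s ih =>
  rcases s.eq_empty_or_nonempty with rfl | hs
  · exact ⟨c₀, by rwa [union_empty], fun _ _ => rfl⟩
  obtain ⟨v, hv, hlt⟩ := hdegen s Subset.rfl hs
  obtain ⟨c, hc, hagree⟩ := ih (s.erase v) (erase_ssubset hv)
    (hdisj.mono_right (erase_subset v s)) fun T hT => hdegen T (hT.trans (erase_subset v s))
  have hvP : v ∉ P := disjoint_right.1 hdisj hv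
  have hcolors : (H.neighborsIn (P ∪ s.erase v) v).image c ⊆
      (H.neighborsIn P v).image c₀ ∪ (H.neighborsIn s v).image c := by
    rw [neighborsIn_union, image_union]
    refine union_subset_union (fun b hb => ?_)
      (image_subset_image (neighborsIn_mono (erase_subset v s)))
    obtain ⟨x, hx, rfl⟩ := mem_image.1 hb
    exact mem_image.2 ⟨x, hx, (hagree x (mem_neighborsIn.1 hx).1).symm⟩
  obtain ⟨b, hb⟩ := hc.exists_update (v := v) <| calc
    _ ≤ #((H.neighborsIn P v).image c₀) + #((H.neighborsIn s v).image c) :=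
      (card_le_card hcolors).trans (card_union_le _ _)
    _ ≤ #((H.neighborsIn P v).image c₀) + #(H.neighborsIn s v) :=
      Nat.add_le_add_left card_image_le _
    _ < k := by omega
  refine ⟨Function.update c v b, ?_, fun x hx => ?_⟩
  · rwa [← union_insert, insert_erase hv] at hb
  · rw [Function.update_of_ne (ne_of_mem_of_not_mem hx hvP), hagree x hx]

end IsColoringOn

lemma colorableOn_of_card_neighborsIn_lt (hv : v ∈ s) (hlt : #(H.neighborsIn s v) < k)
    (h : H.ColorableOn k (s.erase v)) : H.ColorableOn k s := by
  obtain ⟨c, hc⟩ := h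
  obtain ⟨b, hb⟩ := hc.exists_update (v := v) <|
    card_image_le.trans_lt ((card_le_card (neighborsIn_mono (erase_subset v s))).trans_lt hlt)
  exact ⟨_, insert_erase hv ▸ hb⟩

lemma _root_.Equiv.Perm.exists_apply_eq_pair {a b a' b' : α} (h : a = b ↔ a' = b') :
    ∃ σ : Equiv.Perm α, σ a = a' ∧ σ b = b' := by
  set σ₁ := Equiv.swap a a'
  refine ⟨σ₁.trans (Equiv.swap (σ₁ b) b'), ?_, by simp⟩
  rw [Equiv.trans_apply, Equiv.swap_apply_left]
  by_cases hab : a = b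
  · rw [← hab, Equiv.swap_apply_left, h.1 hab, Equiv.swap_self, Equiv.refl_apply]
  · exact Equiv.swap_apply_of_ne_of_ne (fun h' => hab (σ₁.injective (by simpa [σ₁] using h')))
      (mt h.2 hab)

structure IsSeparation (H : SimpleGraph V) (s A B : Finset V) : Prop where
  union_eq : A ∪ B = s
  left_nonempty : (A \ B).Nonempty
  right_nonempty : (B \ A).Nonempty
  not_adj : ∀ u ∈ A \ B, ∀ w ∈ B \ A, ¬ H.Adj u w

lemma isSeparation_sdiff (hAs : A ⊆ s) (hTA : T ⊆ A) (hT : T.Nonempty) (hsA : (s \ A).Nonempty)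
    (hclosed : ∀ u ∈ T, ∀ w ∈ s, H.Adj u w → w ∈ A) : H.IsSeparation s A (s \ T) := by
  have hAT : A \ (s \ T) = T := by
    ext w; simp only [mem_sdiff]; grind
  refine ⟨?_, by rwa [hAT], ?_, fun u hu w hw huw => ?_⟩
  · ext w; simp only [mem_union, mem_sdiff]; grind
  · rwa [sdiff_sdiff_left, sup_eq_right.2 hTA]
  · rw [hAT] at hu
    rw [mem_sdiff, mem_sdiff] at hw
    exact hw.2 (hclosed u hu w hw.1.1 huw)

lemma exists_adj_sdiff_of_forall_isSeparation {m : ℕ}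
    (hconn : ∀ A B, H.IsSeparation s A B → m < #(A ∩ B)) (hAs : A ⊆ s) (hTA : T ⊆ A)
    (hT : T.Nonempty) (hsA : (s \ A).Nonempty) (hm : #(A \ T) ≤ m) :
    ∃ u ∈ T, ∃ w ∈ s \ A, H.Adj u w := by
  by_contra! hclosed
  have := hconn _ _ (isSeparation_sdiff hAs hTA hT hsA fun u hu w hw huw =>
    by_contra fun hwA => hclosed u hu w (mem_sdiff.2 ⟨hw, hwA⟩) huw)
  have hAT : A ∩ (s \ T) = A \ T := by
    ext w; have := @hAs w; simp only [mem_inter, mem_sdiff]; tauto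
  rw [hAT] at this
  omega

namespace IsSeparation

lemma symm (h : H.IsSeparation s A B) : H.IsSeparation s B A :=
  ⟨union_comm A B ▸ h.union_eq, h.right_nonempty, h.left_nonempty,
    fun u hu w hw huw => h.not_adj w hw u hu huw.symm⟩

lemma left_subset (h : H.IsSeparation s A B) : A ⊆ s :=
  h.union_eq ▸ subset_union_left

lemma card_left_lt (h : H.IsSeparation s A B) : #A < #s := by
  obtain ⟨w, hw⟩ := h.right_nonempty
  rw [mem_sdiff] at hw
  exact card_lt_card ((ssubset_iff_of_subset h.left_subset).2 ⟨w, h.symm.left_subset hw.1, hw.2⟩)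

lemma erase (h : H.IsSeparation s A B) (hx : x ∈ B) (hnadj : ∀ w ∈ A \ B, ¬ H.Adj x w) :
    H.IsSeparation s (A.erase x) B := by
  have hAB : A.erase x \ B = A \ B := by
    ext w; simp only [mem_sdiff, mem_erase]; grind
  refine ⟨?_, hAB ▸ h.left_nonempty,
    h.right_nonempty.mono (sdiff_subset_sdiff Subset.rfl (erase_subset x A)),
    fun u hu w hw huw => ?_⟩
  · rw [← h.union_eq]; ext w; simp only [mem_union, mem_erase]; grind
  · rw [hAB] at hu
    rcases eq_or_ne w x with rfl | hwx
    · exact hnadj u hu huw.symm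
    · exact h.not_adj u hu w (by simp_all) huw

lemma exists_adj_of_card_inter_le_two (h : H.IsSeparation s A B) (hAB : #(A ∩ B) ≤ 2)
    (hx : x ∈ A ∩ B) (hconn : ∀ A' B', H.IsSeparation s A' B' → 1 < #(A' ∩ B')) :
    ∃ w ∈ A \ B, H.Adj x w := by
  by_contra! hno
  have := hconn _ _ (h.erase (mem_inter.1 hx).2 hno)
  rw [erase_inter, card_erase_of_mem hx] at this
  omega

lemma colorableOn_of_subset_pair (h : H.IsSeparation s A B) (hAB : A ∩ B ⊆ {x, y})
    {c₁ c₂ : V → Fin k} (h₁ : H.IsColoringOn c₁ A) (h₂ : H.IsColoringOn c₂ B)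
    (hxy : c₂ x = c₂ y ↔ c₁ x = c₁ y) : H.ColorableOn k s := by
  obtain ⟨σ, hσx, hσy⟩ := Equiv.Perm.exists_apply_eq_pair hxy
  refine ⟨A.piecewise c₁ (σ ∘ c₂), h.union_eq ▸ h₁.piecewise (h₂.comp_injective σ.injective)
    (fun z hz => ?_) h.not_adj⟩
  rcases mem_insert.1 (hAB hz) with rfl | hz
  · exact hσx.symm
  · rw [mem_singleton.1 hz]; exact hσy.symm

lemma colorableOn_of_card_inter_le_one (h : H.IsSeparation s A B) (hAB : #(A ∩ B) ≤ 1)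
    (hA : H.ColorableOn k A) (hB : H.ColorableOn k B) : H.ColorableOn k s := by
  obtain ⟨c₁, h₁⟩ := hA
  obtain ⟨c₂, h₂⟩ := hB
  have : Nonempty V := ⟨h.left_nonempty.choose⟩
  obtain ⟨v, hv⟩ := card_le_one_iff_subset_singleton.1 hAB
  exact h.colorableOn_of_subset_pair (x := v) (y := v) (by simpa using hv) h₁ h₂ (by simp)

end IsSeparation

lemma exists_common_neighbors_of_not_cliqueFreeOn_sup_edge {n : ℕ} (hcf : H.CliqueFreeOn A n)
    (hcl : ¬ (H ⊔ edge x y).CliqueFreeOn A n) (hxy : x ≠ y) :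
    ∃ Q ⊆ A, x ∉ Q ∧ y ∉ Q ∧ #Q + 2 = n ∧ ∀ q ∈ Q, H.Adj x q ∧ H.Adj y q := by
  simp only [CliqueFreeOn, not_forall, not_not] at hcl
  obtain ⟨S, hSA, hS⟩ := hcl
  have hmem : ∀ {z z'}, (H ⊔ edge z z').IsNClique n S → z ∈ S := fun {z z'} hS' => by
    by_contra hzS
    refine hcf hSA ⟨?_, hS'.2⟩
    simpa [Set.sdiff_singleton_eq_self (mem_coe.not.2 hzS)] using hS'.1.sdiff_of_sup_edge
  have hxS : x ∈ S := hmem hS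
  have hyS : y ∈ S := hmem (edge_comm x y ▸ hS)
  refine ⟨(S.erase x).erase y, fun q hq => hSA (mem_of_mem_erase (mem_of_mem_erase hq)),
    fun hx => (mem_erase.1 (mem_of_mem_erase hx)).1 rfl, notMem_erase y _, ?_, fun q hq => ?_⟩
  · have : 2 ≤ #S := card_pair hxy ▸ card_le_card (by simp [insert_subset_iff, hxS, hyS])
    rw [card_erase_of_mem (mem_erase.2 ⟨hxy.symm, hyS⟩), card_erase_of_mem hxS, ← hS.2]
    omega
  · simp only [mem_erase] at hq
    obtain ⟨hqy, hqx, hqS⟩ := hq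
    have hxq := hS.1 hxS hqS (Ne.symm hqx)
    have hyq := hS.1 hyS hqS (Ne.symm hqy)
    simp only [sup_adj, edge_adj] at hxq hyq
    grind

lemma _root_.Finset.mem_sdiff_of_inter_subset_pair (hAB : A ∩ B ⊆ {x, y}) {w : V} (hw : w ∈ A)
    (hwx : w ≠ x) (hwy : w ≠ y) : w ∈ A \ B :=
  mem_sdiff.2 ⟨hw, fun hwB => by simpa [hwx, hwy] using hAB (mem_inter.2 ⟨hw, hwB⟩)⟩

namespace IsSeparation

/-- The other `k - 1` vertices of the `K_{k+1}` through `xy` are common neighbours of `x` and `y`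
in `A \ B`; the rest is degree counting. -/
lemma neighborsIn_of_not_cliqueFreeOn_sup_edge (h : H.IsSeparation s A B)
    (hAB : A ∩ B = {x, y}) (hxy : x ≠ y) (hdeg : H.DegreeLEOn s k)
    (hcf : H.CliqueFreeOn s (k + 1)) (hy : ∃ w ∈ B \ A, H.Adj y w)
    (hcl : ¬ (H ⊔ edge x y).CliqueFreeOn A (k + 1)) :
    H.neighborsIn (A \ B) y ⊆ H.neighborsIn (A \ B) x ∧
      #(H.neighborsIn (B \ A) x) + #(H.neighborsIn (B \ A) y) ≤ 2 := by
  have hAs := h.left_subset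
  have hABs : A \ B ⊆ s := sdiff_subset.trans hAs
  have hBAs : B \ A ⊆ s := sdiff_subset.trans h.symm.left_subset
  obtain ⟨Q, hQA, hxQ, hyQ, hQ, hQadj⟩ := exists_common_neighbors_of_not_cliqueFreeOn_sup_edge
    (CliqueFreeOn.subset H (coe_subset.2 hAs) hcf) hcl hxy
  have hQN : ∀ z ∈ ({x, y} : Finset V), Q ⊆ H.neighborsIn (A \ B) z := by
    intro z hz q hq
    refine mem_neighborsIn.2
      ⟨mem_sdiff_of_inter_subset_pair hAB.le (hQA hq) (by grind) (by grind), ?_⟩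
    rcases mem_insert.1 hz with rfl | hz
    · exact (hQadj q hq).1
    · exact mem_singleton.1 hz ▸ (hQadj q hq).2
  have hzs : ∀ z ∈ ({x, y} : Finset V), z ∈ s := fun z hz =>
    hAs (mem_inter.1 (hAB ▸ hz : z ∈ A ∩ B)).1
  have hNB : ∀ z ∈ ({x, y} : Finset V), #(H.neighborsIn (B \ A) z) ≤ 1 := by
    intro z hz
    have h₁ := card_le_card (hQN z hz)
    have h₂ := card_le_card (neighborsIn_mono (v := z) (H := H) (union_subset hABs hBAs))
    rw [card_neighborsIn_union disjoint_sdiff_sdiff] at h₂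
    have := hdeg z (hzs z hz)
    omega
  refine ⟨fun w hw => ?_, by have := hNB x (by simp); have := hNB y (by simp); omega⟩
  -- `y` also has a neighbour in `B \ A`, so it has no neighbours in `A \ B` besides `Q`
  suffices hNy : H.neighborsIn (A \ B) y = Q from
    mem_neighborsIn.2 ⟨(mem_neighborsIn.1 hw).1, (hQadj w (hNy ▸ hw)).1⟩
  obtain ⟨w', hw', hyw'⟩ := hy
  refine (eq_of_subset_of_card_le (hQN y (by simp)) ?_).symm
  have := card_neighborsIn_lt hABs (hBAs hw') (fun h' => (mem_sdiff.1 hw').2 (mem_sdiff.1 h').1)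
    hyw'
  have := hdeg y (hzs y (by simp))
  omega

end IsSeparation

variable (V) in
def BrooksBelow (k n : ℕ) : Prop :=
  ∀ (H : SimpleGraph V) (t : Finset V), #t < n → H.DegreeLEOn t k → H.CliqueFreeOn t (k + 1) →
    H.ColorableOn k t

namespace BrooksBelow

lemma colorableOn (ih : BrooksBelow V k #s) (hdeg : H.DegreeLEOn s k)
    (hcf : H.CliqueFreeOn s (k + 1)) (hts : t ⊆ s) (hlt : #t < #s) : H.ColorableOn k t :=
  ih H t hlt (hdeg.mono hts) (CliqueFreeOn.subset H (coe_subset.2 hts) hcf)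

lemma exists_coloringOn_ne (ih : BrooksBelow V k #s) (hdeg : H.DegreeLEOn s k)
    (hts : t ⊆ s) (hlt : #t < #s) (hx : x ∈ t) (hy : y ∈ t) (hxy : x ≠ y)
    (hxt : #(H.neighborsIn t x) < k) (hyt : #(H.neighborsIn t y) < k)
    (hcf : (H ⊔ edge x y).CliqueFreeOn t (k + 1)) :
    ∃ c : V → Fin k, H.IsColoringOn c t ∧ c x ≠ c y :=
  let ⟨c, hc⟩ := ih _ t hlt ((hdeg.mono hts).sup_edge hxt hyt) hcf
  ⟨c, hc.of_sup_edge hx hy hxy⟩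

end BrooksBelow

namespace IsSeparation

lemma colorableOn_of_not_cliqueFreeOn_sup_edge (h : H.IsSeparation s A B)
    (hAB : A ∩ B = {x, y}) (hxy : x ≠ y) (hnadj : ¬ H.Adj x y) (hk : 3 ≤ k)
    (hdeg : H.DegreeLEOn s k) (hcf : H.CliqueFreeOn s (k + 1)) (hy : ∃ w ∈ B \ A, H.Adj y w)
    (hcl : ¬ (H ⊔ edge x y).CliqueFreeOn A (k + 1)) (ih : BrooksBelow V k #s) :
    H.ColorableOn k s := by
  obtain ⟨hNy, hNB⟩ := h.neighborsIn_of_not_cliqueFreeOn_sup_edge hAB hxy hdeg hcf hy hcl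
  have hxAB : x ∈ A ∩ B := hAB ▸ mem_insert_self x {y}
  have hyAB : y ∈ A ∩ B := hAB ▸ mem_insert_of_mem (mem_singleton_self y)
  rw [mem_inter] at hxAB hyAB
  obtain ⟨c₁, hc₁⟩ := ih.colorableOn hdeg hcf ((erase_subset y A).trans h.left_subset)
    ((card_erase_lt_of_mem hyAB.1).trans h.card_left_lt)
  have hNy' : H.neighborsIn (A.erase y) y ⊆ H.neighborsIn (A.erase y) x := fun w hw => by
    rw [mem_neighborsIn, mem_erase] at hw
    have hwx : w ≠ x := by rintro rfl; exact hnadj hw.2.symm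
    have := hNy (mem_neighborsIn.2 ⟨mem_sdiff_of_inter_subset_pair hAB.le hw.1.2 hwx hw.1.1, hw.2⟩)
    exact mem_neighborsIn.2 ⟨mem_erase.2 hw.1, (mem_neighborsIn.1 this).2⟩
  have hc₁' := hc₁.update_insert_of_neighborsIn_subset (mem_erase.2 ⟨hxy, hxAB.1⟩) hNy'
  rw [insert_erase hyAB.1] at hc₁'
  obtain ⟨c₂, hc₂⟩ := ih.colorableOn (t := B \ A) hdeg hcf (sdiff_subset.trans h.symm.left_subset)
    ((card_le_card sdiff_subset).trans_lt h.symm.card_left_lt)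
  obtain ⟨b, hc₂'⟩ := hc₂.exists_update_pair hnadj (by omega)
  have hB : insert y (insert x (B \ A)) = B := by
    refine (insert_subset hyAB.2 (insert_subset hxAB.2 sdiff_subset)).antisymm fun w hw => ?_
    by_cases hwA : w ∈ A
    · rcases eq_or_ne w x with rfl | hwx
      · exact mem_insert_of_mem (mem_insert_self w _)
      rcases eq_or_ne w y with rfl | hwy
      · exact mem_insert_self w _
      exact absurd hw (mem_sdiff.1 (mem_sdiff_of_inter_subset_pair hAB.le hwA hwx hwy)).2
    · exact mem_insert_of_mem (mem_insert_of_mem (mem_sdiff.2 ⟨hw, hwA⟩))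
  rw [hB] at hc₂'
  exact h.colorableOn_of_subset_pair hAB.le hc₁' hc₂' (by simp [Function.update_of_ne hxy])

lemma colorableOn_of_inter_eq_pair (h : H.IsSeparation s A B) (hAB : A ∩ B = {x, y})
    (hxy : x ≠ y) (hk : 3 ≤ k) (hreg : ∀ v ∈ s, #(H.neighborsIn s v) = k)
    (hcf : H.CliqueFreeOn s (k + 1))
    (hconn : ∀ A' B', H.IsSeparation s A' B' → 1 < #(A' ∩ B')) (ih : BrooksBelow V k #s) :
    H.ColorableOn k s := by
  have hdeg : H.DegreeLEOn s k := fun v hv => (hreg v hv).le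
  have hBA : B ∩ A = {x, y} := inter_comm B A ▸ hAB
  have hnbr : ∀ {A B}, H.IsSeparation s A B → A ∩ B = {x, y} → ∀ z ∈ ({x, y} : Finset V),
      ∃ w ∈ B \ A, H.Adj z w := fun h' hAB' z hz =>
    h'.symm.exists_adj_of_card_inter_le_two (by rw [inter_comm, hAB', card_pair hxy])
      (by rwa [inter_comm, hAB']) hconn
  have hlt : ∀ {A B}, H.IsSeparation s A B → A ∩ B = {x, y} → ∀ z ∈ ({x, y} : Finset V),
      #(H.neighborsIn A z) < k := fun h' hAB' z hz => by
    obtain ⟨w, hw, hzw⟩ := hnbr h' hAB' z hz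
    rw [mem_sdiff] at hw
    rw [← hreg z (h'.left_subset (mem_inter.1 (by rwa [hAB'] : z ∈ _ ∩ _)).1)]
    exact card_neighborsIn_lt h'.left_subset (h'.symm.left_subset hw.1) hw.2 hzw
  have hxAB : x ∈ A ∩ B := hAB ▸ mem_insert_self x {y}
  have hyAB : y ∈ A ∩ B := hAB ▸ mem_insert_of_mem (mem_singleton_self y)
  rw [mem_inter] at hxAB hyAB
  by_cases hadj : H.Adj x y
  · obtain ⟨c₁, hc₁⟩ := ih.colorableOn hdeg hcf h.left_subset h.card_left_lt
    obtain ⟨c₂, hc₂⟩ := ih.colorableOn hdeg hcf h.symm.left_subset h.symm.card_left_lt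
    exact h.colorableOn_of_subset_pair hAB.le hc₁ hc₂
      (iff_of_false (hc₂ x hxAB.2 y hyAB.2 hadj) (hc₁ x hxAB.1 y hyAB.1 hadj))
  by_cases hcfA : (H ⊔ edge x y).CliqueFreeOn A (k + 1)
  · by_cases hcfB : (H ⊔ edge x y).CliqueFreeOn B (k + 1)
    · obtain ⟨c₁, hc₁, hne₁⟩ := ih.exists_coloringOn_ne hdeg h.left_subset h.card_left_lt
        hxAB.1 hyAB.1 hxy (hlt h hAB x (by simp)) (hlt h hAB y (by simp)) hcfA
      obtain ⟨c₂, hc₂, hne₂⟩ := ih.exists_coloringOn_ne hdeg h.symm.left_subset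
        h.symm.card_left_lt hxAB.2 hyAB.2 hxy (hlt h.symm hBA x (by simp))
        (hlt h.symm hBA y (by simp)) hcfB
      exact h.colorableOn_of_subset_pair hAB.le hc₁ hc₂ (iff_of_false hne₂ hne₁)
    · exact h.symm.colorableOn_of_not_cliqueFreeOn_sup_edge hBA hxy hadj hk hdeg hcf
        (hnbr h.symm hBA y (by simp)) hcfB ih
  · exact h.colorableOn_of_not_cliqueFreeOn_sup_edge hAB hxy hadj hk hdeg hcf
      (hnbr h hAB y (by simp)) hcfA ih

end IsSeparation

lemma exists_induced_path (hs : s.Nonempty) (hreg : ∀ v ∈ s, #(H.neighborsIn s v) = k)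
    (hcf : H.CliqueFreeOn s (k + 1)) (hconn : ∀ A B, H.IsSeparation s A B → 0 < #(A ∩ B)) :
    ∃ a ∈ s, ∃ b ∈ s, ∃ c ∈ s, H.Adj a b ∧ H.Adj b c ∧ ¬ H.Adj a c ∧ a ≠ c := by
  by_contra! htrans
  obtain ⟨a, ha⟩ := hs
  set N := insert a (H.neighborsIn s a)
  have hNs : N ⊆ s := insert_subset ha (filter_subset _ s)
  have hmemN : ∀ u ∈ s, u ∈ N ↔ u = a ∨ H.Adj a u := by simp +contextual [N]
  have hN : s ⊆ N := by
    by_contra hsN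
    obtain ⟨u, hu, w, hw, huw⟩ := exists_adj_sdiff_of_forall_isSeparation hconn hNs Subset.rfl
      (insert_nonempty a _) (sdiff_nonempty.2 hsN) (by simp)
    rw [mem_sdiff, hmemN w hw.1] at hw
    rcases (hmemN u (hNs hu)).1 hu with rfl | hau
    · exact hw.2 (Or.inr huw)
    · exact hw.2 (Or.inl (htrans a ha u (hNs hu) w hw.1 hau huw (fun h => hw.2 (Or.inr h))).symm)
  refine hcf (t := s) Subset.rfl ⟨fun u hu w hw huw => ?_, ?_⟩
  · rcases (hmemN u hu).1 (hN hu) with rfl | hau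
    · exact ((hmemN w hw).1 (hN hw)).resolve_left huw.symm
    rcases (hmemN w hw).1 (hN hw) with rfl | haw
    · exact hau.symm
    · by_contra huw'
      exact huw (htrans u hu a ha w hw hau.symm haw huw')
  · rw [(hNs.antisymm hN).symm, card_insert_of_notMem (by simp), hreg a ha]

lemma colorableOn_of_induced_path (hreg : ∀ v ∈ s, #(H.neighborsIn s v) = k)
    (hconn : ∀ A B, H.IsSeparation s A B → 2 < #(A ∩ B)) {a b c : V} (ha : a ∈ s) (hb : b ∈ s)
    (hc : c ∈ s) (hab : H.Adj a b) (hbc : H.Adj b c) (hac : ¬ H.Adj a c) (hne : a ≠ c) :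
    H.ColorableOn k s := by
  have hk : 0 < k := hreg b hb ▸ card_pos.2 ⟨a, mem_neighborsIn.2 ⟨ha, hab.symm⟩⟩
  set P : Finset V := {a, c}
  set c₀ : V → Fin k := fun _ => ⟨0, hk⟩
  have hPs : P ⊆ s := by simp [P, insert_subset_iff, ha, hc]
  have hc₀ : H.IsColoringOn c₀ P := by
    intro u hu w hw huw
    simp only [P, mem_insert, mem_singleton] at hu hw
    rcases hu with rfl | rfl <;> rcases hw with rfl | rfl
    exacts [absurd huw (H.loopless.irrefl _), absurd huw hac, absurd huw.symm hac,
      absurd huw (H.loopless.irrefl _)]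
  suffices hdegen : ∀ T ⊆ s \ P, T.Nonempty →
      ∃ v ∈ T, #(H.neighborsIn T v) + #((H.neighborsIn P v).image c₀) < k by
    obtain ⟨col, hcol, -⟩ := hc₀.exists_extend disjoint_sdiff hdegen
    exact ⟨col, by rwa [union_sdiff_of_subset hPs] at hcol⟩
  intro T hT hTne
  have hTP : Disjoint T P := disjoint_of_subset_left hT sdiff_disjoint
  have hTPs : T ∪ P ⊆ s := union_subset (hT.trans sdiff_subset) hPs
  by_cases hbT : b ∈ T
  · -- `b` has the two neighbours `a` and `c` outside `T`, and they share a colour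
    refine ⟨b, hbT, ?_⟩
    have hNP : H.neighborsIn P b = P := by
      ext w
      simp only [mem_neighborsIn, P, mem_insert, mem_singleton]
      grind [H.adj_symm hab]
    have := card_le_card (neighborsIn_mono (H := H) (v := b) hTPs)
    rw [card_neighborsIn_union hTP, hNP, card_pair hne, hreg b hb] at this
    have : #((H.neighborsIn P b).image c₀) ≤ 1 :=
      (card_le_card (image_subset_iff.2 fun _ _ => mem_singleton_self _)).trans_eq
        (card_singleton _)
    omega
  · obtain ⟨u, hu, w, hw, huw⟩ := exists_adj_sdiff_of_forall_isSeparation hconn hTPs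
      subset_union_left hTne ⟨b, by simp [P, hb, hbT, hab.ne.symm, hbc.ne]⟩
      ((card_le_card (union_sdiff_left T P ▸ sdiff_subset)).trans (card_pair hne).le)
    refine ⟨u, hu, ?_⟩
    have := card_neighborsIn_lt hTPs (mem_sdiff.1 hw).1 (mem_sdiff.1 hw).2 huw
    rw [card_neighborsIn_union hTP, hreg u (hTPs (mem_union_left P hu))] at this
    have := card_image_le (s := H.neighborsIn P u) (f := c₀)
    omega

theorem brooksBelow (hk : 3 ≤ k) (n : ℕ) : BrooksBelow V k n := by
  induction n with
  | zero => exact fun H s hs => absurd hs (Nat.not_lt_zero _)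
  | succ n ih =>
  intro H s hs hdeg hcf
  replace ih : BrooksBelow V k #s := fun H' t ht => ih H' t (by omega)
  rcases s.eq_empty_or_nonempty with rfl | hne
  · exact ⟨fun _ => ⟨0, by omega⟩, fun u hu => absurd hu (notMem_empty u)⟩
  by_cases hlow : ∃ v ∈ s, #(H.neighborsIn s v) < k
  · obtain ⟨v, hv, hlt⟩ := hlow
    exact colorableOn_of_card_neighborsIn_lt hv hlt
      (ih.colorableOn hdeg hcf (erase_subset v s) (card_erase_lt_of_mem hv))
  have hreg : ∀ v ∈ s, #(H.neighborsIn s v) = k := fun v hv =>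
    (hdeg v hv).antisymm (not_lt.1 fun h => hlow ⟨v, hv, h⟩)
  by_cases hsep₁ : ∃ A B, H.IsSeparation s A B ∧ #(A ∩ B) ≤ 1
  · obtain ⟨A, B, hsep, hAB⟩ := hsep₁
    exact hsep.colorableOn_of_card_inter_le_one hAB
      (ih.colorableOn hdeg hcf hsep.left_subset hsep.card_left_lt)
      (ih.colorableOn hdeg hcf hsep.symm.left_subset hsep.symm.card_left_lt)
  push Not at hsep₁
  by_cases hsep₂ : ∃ A B, H.IsSeparation s A B ∧ #(A ∩ B) ≤ 2
  · obtain ⟨A, B, hsep, hAB⟩ := hsep₂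
    obtain ⟨x, y, hxy, hAB⟩ := (card_eq_two (s := A ∩ B)).1 (by have := hsep₁ A B hsep; omega)
    exact hsep.colorableOn_of_inter_eq_pair hAB hxy hk hreg hcf hsep₁ ih
  push Not at hsep₂
  obtain ⟨a, ha, b, hb, c, hc, hab, hbc, hac, hne⟩ := exists_induced_path hne hreg hcf
    fun A B hsep => by have := hsep₁ A B hsep; omega
  exact colorableOn_of_induced_path hreg hsep₂ ha hb hc hab hbc hac hne

end SimpleGraph

theorem brooks_contrapositive {V : Type*} [Fintype V] (G : SimpleGraph V)
    [DecidableRel G.Adj]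
    (hchi : G.chromaticNumber = (G.maxDegree + 1 : ℕ))
    (h4 : 4 ≤ G.maxDegree + 1) :
    ¬ G.CliqueFree (G.maxDegree + 1) := by
  intro hcf
  have hdeg : G.DegreeLEOn univ G.maxDegree := fun v _ =>
    (card_neighborsIn_univ (H := G)).trans_le (G.degree_le_maxDegree v)
  have hcol : G.Colorable G.maxDegree := colorableOn_univ_iff.1 <|
    brooksBelow (by omega) _ G univ (Nat.lt_succ_self _) hdeg hcf.cliqueFreeOn
  have := hcol.chromaticNumber_le
  rw [hchi, Nat.cast_le] at this
  omega
end

section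
/- Every connected finite simple graph G that is neither a complete graph nor an odd cycle satisfies χ(G) ≤ Δ(G) (Brooks' Theorem, standard form). -/
/-!
Lovász's greedy proof. Colouring the vertices in order of decreasing distance from a vertex `r`,
every vertex but `r` still has an uncoloured neighbour when its turn comes, so sees at most `Δ - 1`
colours; hence `G` is `Δ`-colourable as soon as `r` itself sees fewer than `Δ` colours. This
happens if `deg r < Δ`. At a cut vertex the graph splits into two such pieces, whose colourings
are glued after permuting colours. There remains a `Δ`-regular 2-connected graph. For `Δ ≥ 3` and
`G` not complete, some vertex `r` has non-adjacent neighbours `a`, `b` with `G - a - b` connected: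
colour `a` and `b` alike first, then `r` sees at most `Δ - 1` colours. For `Δ = 2` the graph is a
cycle, and for `Δ ≤ 1` it is complete.
-/

open Finset

namespace SimpleGraph

variable {V : Type*} {G : SimpleGraph V}

theorem Connected.eq_univ_of_adj_mem [Fintype V] (hG : G.Connected) {s : Finset V}
    (hs : s.Nonempty) (h : ∀ ⦃u w⦄, u ∈ s → G.Adj u w → w ∈ s) : s = univ := by
  obtain ⟨u, hu⟩ := hs
  refine eq_univ_of_forall fun w => ?_
  obtain ⟨p⟩ := hG.preconnected u w
  induction p with
  | nil => exact hu
  | cons hadj _ ih => exact ih (h hu hadj)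

def ProperOn {α : Type*} (G : SimpleGraph V) (c : V → α) (s : Finset V) : Prop :=
  ∀ ⦃u⦄, u ∈ s → ∀ ⦃v⦄, v ∈ s → G.Adj u v → c u ≠ c v

theorem ProperOn.colorable [Fintype V] {k : ℕ} {c : V → Fin k} (hc : G.ProperOn c univ) :
    G.Colorable k :=
  ⟨Coloring.mk c fun h => hc (mem_univ _) (mem_univ _) h⟩

section Greedy

variable [Fintype V] [DecidableRel G.Adj] {k : ℕ}

theorem ProperOn.update_insert [DecidableEq V] {α : Type*} [DecidableEq α] {c : V → α}
    {s : Finset V} {v : V} {m : α} (hc : G.ProperOn c s) (hv : v ∉ s)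
    (hm : m ∉ (G.neighborFinset v ∩ s).image c) :
    G.ProperOn (Function.update c v m) (insert v s) := by
  have hfree : ∀ ⦃u⦄, u ∈ s → G.Adj v u → m ≠ c u := fun u hu hvu h =>
    hm (mem_image.2 ⟨u, mem_inter.2 ⟨(G.mem_neighborFinset v u).2 hvu, hu⟩, h.symm⟩)
  intro x hx y hy hxy
  rcases mem_insert.1 hx with rfl | hxs <;> rcases mem_insert.1 hy with rfl | hys
  · exact absurd hxy G.irrefl
  · rw [Function.update_self, Function.update_of_ne (ne_of_mem_of_not_mem hys hv)]
    exact hfree hys hxy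
  · rw [Function.update_self, Function.update_of_ne (ne_of_mem_of_not_mem hxs hv)]
    exact (hfree hxs hxy.symm).symm
  · rw [Function.update_of_ne (ne_of_mem_of_not_mem hxs hv),
      Function.update_of_ne (ne_of_mem_of_not_mem hys hv)]
    exact hc hxs hys hxy

/-- The vertex `v` provided by `H` is coloured last: it sees at most `#(N v ∩ t)` colours from `t`
and the colours `c₀` uses on its neighbours in `P`. -/
theorem ProperOn.exists_extension [DecidableEq V] {c₀ : V → Fin k} {P : Finset V}
    (hP : G.ProperOn c₀ P) (t : Finset V) (hPt : Disjoint P t)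
    (H : ∀ s ⊆ t, s.Nonempty →
      ∃ v ∈ s, #(G.neighborFinset v ∩ s) + #((G.neighborFinset v ∩ P).image c₀) < k) :
    ∃ c : V → Fin k, (∀ v ∈ P, c v = c₀ v) ∧ G.ProperOn c (P ∪ t) := by
  induction t using Finset.strongInduction with
  | H t ih =>
  rcases t.eq_empty_or_nonempty with rfl | ht
  · exact ⟨c₀, fun _ _ => rfl, by simpa using hP⟩
  obtain ⟨v, hv, hvk⟩ := H t Subset.rfl ht
  obtain ⟨c, hcP, hc⟩ := ih (t.erase v) (erase_ssubset hv)
    (disjoint_of_subset_right (erase_subset _ _) hPt) fun s hs => H s (hs.trans (erase_subset _ _))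
  have hvP : v ∉ P := Finset.disjoint_right.1 hPt hv
  have hforb : (G.neighborFinset v ∩ (P ∪ t.erase v)).image c ⊆
      (G.neighborFinset v ∩ t).image c ∪ (G.neighborFinset v ∩ P).image c₀ := by
    intro x hx
    obtain ⟨u, hu, rfl⟩ := mem_image.1 hx
    rw [mem_inter, mem_union] at hu
    rcases hu with ⟨hvu, huP | hut⟩
    · exact mem_union_right _ (mem_image.2 ⟨u, mem_inter.2 ⟨hvu, huP⟩, (hcP u huP).symm⟩)
    · exact mem_union_left _ (mem_image_of_mem c (mem_inter.2 ⟨hvu, mem_of_mem_erase hut⟩))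
  obtain ⟨m, -, hm⟩ := exists_mem_notMem_of_card_lt_card (t := univ) <| calc
    _ ≤ _ := card_le_card hforb
    _ ≤ #((G.neighborFinset v ∩ t).image c) + #((G.neighborFinset v ∩ P).image c₀) :=
      card_union_le _ _
    _ < k := lt_of_le_of_lt (Nat.add_le_add_right card_image_le _) hvk
    _ = #(univ : Finset (Fin k)) := (card_fin k).symm
  refine ⟨Function.update c v m, fun u hu => ?_, ?_⟩
  · rw [Function.update_of_ne (ne_of_mem_of_not_mem hu hvP)]
    exact hcP u hu
  · rw [← insert_erase hv, union_insert]
    exact hc.update_insert (by simp [hvP]) hm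

theorem exists_properOn_of_degenerate [DecidableEq V] (t : Finset V) (ht : t.Nonempty)
    (H : ∀ s ⊆ t, s.Nonempty → ∃ v ∈ s, #(G.neighborFinset v ∩ s) < k) :
    ∃ c : V → Fin k, G.ProperOn c t := by
  have hk : 0 < k := by
    obtain ⟨v, -, hv⟩ := H t Subset.rfl ht
    omega
  have hempty : G.ProperOn (fun _ => (⟨0, hk⟩ : Fin k)) ∅ := by simp [ProperOn]
  obtain ⟨c, -, hc⟩ := hempty.exists_extension t (disjoint_empty_left t) fun s hst hs => by
    simpa using H s hst hs
  exact ⟨c, by simpa using hc⟩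

/-- If every vertex of `s` had `k` neighbours in `s`, then `s` would be closed under adjacency,
hence everything, and `G` would be `k`-regular. -/
theorem Connected.exists_card_neighborFinset_inter_lt [DecidableEq V] (hG : G.Connected)
    (hdeg : ∀ v, G.degree v ≤ k) {s : Finset V} (hs : s.Nonempty)
    (h : s ≠ univ ∨ ∃ v, G.degree v < k) : ∃ v ∈ s, #(G.neighborFinset v ∩ s) < k := by
  by_contra! hge
  have hsub : ∀ v ∈ s, G.neighborFinset v ⊆ s := fun v hv =>
    inter_eq_left.1 <| eq_of_subset_of_card_le inter_subset_left <| by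
      rw [card_neighborFinset_eq_degree]
      exact (hdeg v).trans (hge v hv)
  have hs_univ : s = univ := hG.eq_univ_of_adj_mem hs fun u w hu huw =>
    hsub u hu ((G.mem_neighborFinset u w).2 huw)
  rcases h with h | ⟨v, hv⟩
  · exact h hs_univ
  · have := hge v (hs_univ ▸ mem_univ v)
    rw [hs_univ, inter_univ, card_neighborFinset_eq_degree] at this
    omega

theorem Connected.colorable_of_degree_lt (hG : G.Connected) (hdeg : ∀ v, G.degree v ≤ k) {v : V}
    (hv : G.degree v < k) : G.Colorable k := by
  classical
  obtain ⟨c, hc⟩ := exists_properOn_of_degenerate univ ⟨v, mem_univ v⟩ fun s _ hs =>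
    hG.exists_card_neighborFinset_inter_lt hdeg hs (.inr ⟨v, hv⟩)
  exact hc.colorable

end Greedy

/-- `S` is a nonempty union of connected components of `G - X` other than all of `G - X`;
so `G - X` is connected if and only if it has no fragment. -/
structure IsFragment (G : SimpleGraph V) (X S : Finset V) : Prop where
  nonempty : S.Nonempty
  disjoint : Disjoint S X
  exists_not_mem : ∃ x, x ∉ S ∧ x ∉ X
  mem_of_adj ⦃u w : V⦄ : u ∈ S → G.Adj u w → w ∈ S ∨ w ∈ X

section Fragment

variable [DecidableEq V] {X S : Finset V}

theorem IsFragment.compl [Fintype V] (hS : G.IsFragment X S) : G.IsFragment X (S ∪ X)ᶜ where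
  nonempty := by
    obtain ⟨x, hxS, hxX⟩ := hS.exists_not_mem
    exact ⟨x, by simp [hxS, hxX]⟩
  disjoint := Finset.disjoint_left.2 fun x hx hxX => by simp [hxX] at hx
  exists_not_mem := by
    obtain ⟨x, hx⟩ := hS.nonempty
    exact ⟨x, by simp [hx], Finset.disjoint_left.1 hS.disjoint hx⟩
  mem_of_adj u w hu huw := by
    by_cases hwS : w ∈ S
    · simp only [mem_compl, mem_union] at hu
      exact absurd (hS.mem_of_adj hwS huw.symm) hu
    · by_cases hwX : w ∈ X
      · exact .inr hwX
      · exact .inl (by simp [hwS, hwX])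

theorem IsFragment.exists_isFragment_not_mem [Fintype V] (hS : G.IsFragment X S) (c : V) :
    ∃ S', G.IsFragment X S' ∧ c ∉ S' := by
  by_cases hc : c ∈ S
  · exact ⟨_, hS.compl, by simp [hc]⟩
  · exact ⟨S, hS, hc⟩

theorem IsFragment.sdiff {Y C : Finset V} (hS : G.IsFragment X S) (hC : G.IsFragment Y C)
    (hSY : Disjoint S Y) (hSC : (S \ C).Nonempty) : G.IsFragment (X \ C) (S \ C) where
  nonempty := hSC
  disjoint :=
    disjoint_of_subset_left sdiff_subset (disjoint_of_subset_right sdiff_subset hS.disjoint)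
  exists_not_mem := by
    obtain ⟨x, hx⟩ := hC.nonempty
    exact ⟨x, fun h => (mem_sdiff.1 h).2 hx, fun h => (mem_sdiff.1 h).2 hx⟩
  mem_of_adj u w hu huw := by
    rw [mem_sdiff] at hu
    rw [mem_sdiff, mem_sdiff]
    have hwC : w ∉ C := fun hwC => by
      rcases hC.mem_of_adj hwC huw.symm with h | h
      · exact hu.2 h
      · exact Finset.disjoint_left.1 hSY hu.1 h
    exact (hS.mem_of_adj hu.1 huw).imp (⟨·, hwC⟩) (⟨·, hwC⟩)

theorem IsFragment.erase {a : V} (hS : G.IsFragment X S) (ha : a ∈ X)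
    (h : ∀ u ∈ S, ¬G.Adj u a) : G.IsFragment (X.erase a) S where
  nonempty := hS.nonempty
  disjoint := disjoint_of_subset_right (erase_subset a X) hS.disjoint
  exists_not_mem := ⟨a, Finset.disjoint_right.1 hS.disjoint ha, notMem_erase a X⟩
  mem_of_adj u _ hu huw :=
    (hS.mem_of_adj hu huw).imp_right fun hw => mem_erase.2 ⟨fun hwa => h u hu (hwa ▸ huw), hw⟩

theorem IsFragment.insert {v z : V} (hS : G.IsFragment X S) (hv : v ∉ S) (hvz : G.Adj v z)
    (hz : z ∉ X) : G.IsFragment (insert v X) S where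
  nonempty := hS.nonempty
  disjoint := disjoint_insert_right.2 ⟨hv, hS.disjoint⟩
  exists_not_mem := by
    obtain ⟨x, hxS, hxX⟩ := hS.exists_not_mem
    by_cases hxv : x = v
    · subst hxv
      refine ⟨z, fun hzS => ?_, by simp [hvz.ne', hz]⟩
      rcases hS.mem_of_adj hzS hvz.symm with h | h
      · exact hxS h
      · exact hxX h
    · exact ⟨x, hxS, by simp [hxv, hxX]⟩
  mem_of_adj _ _ hu huw := (hS.mem_of_adj hu huw).imp_right mem_insert_of_mem

variable [Fintype V]

/-- Among the fragments `C` of the graphs `G - v - c` that lie in `Q`, take one of least size. It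
contains a neighbour `a` of `v`, else `c` would be a cut vertex. A fragment `D` of `G - v - a`
avoiding `c` lies in `C`, else `D \ C` would make `v` a cut vertex; so it would be smaller. -/
theorem exists_adj_forall_not_isFragment_pair (hcut : ∀ w S, ¬G.IsFragment {w} S) (v : V)
    (Q : Finset V) (h : ∃ c C, c ≠ v ∧ C ⊆ Q ∧ G.IsFragment {v, c} C) :
    ∃ c C a, c ≠ v ∧ C ⊆ Q ∧ G.IsFragment {v, c} C ∧ a ∈ C ∧ G.Adj v a ∧
      ∀ D, ¬G.IsFragment {v, a} D := by
  classical
  have hn : ∃ n, ∃ c C, c ≠ v ∧ C ⊆ Q ∧ G.IsFragment {v, c} C ∧ #C = n := by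
    obtain ⟨c, C, h⟩ := h
    exact ⟨_, c, C, h.1, h.2.1, h.2.2, rfl⟩
  obtain ⟨c, C, hcv, hCQ, hC, hCn⟩ := Nat.find_spec hn
  have hmin : ∀ c' C', c' ≠ v → C' ⊆ Q → G.IsFragment {v, c'} C' → #C ≤ #C' :=
    fun c' C' h₁ h₂ h₃ => hCn ▸ Nat.find_min' hn ⟨c', C', h₁, h₂, h₃, rfl⟩
  obtain ⟨a, haC, hva⟩ : ∃ a ∈ C, G.Adj v a := by
    by_contra! hno
    have := hC.erase (mem_insert_self v {c}) fun u hu huv => hno u hu huv.symm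
    rw [erase_insert (by simpa using hcv.symm)] at this
    exact hcut c C this
  refine ⟨c, C, a, hcv, hCQ, hC, haC, hva, fun D hD => ?_⟩
  obtain ⟨D, hD, hcD⟩ := hD.exists_isFragment_not_mem c
  have hvD : v ∉ D := Finset.disjoint_right.1 hD.disjoint (mem_insert_self v {a})
  have hvC : v ∉ C := Finset.disjoint_right.1 hC.disjoint (mem_insert_self v {c})
  have hDC : D ⊆ C := by
    by_contra hDC
    have := hD.sdiff hC (by simp [hvD, hcD]) (sdiff_nonempty.2 hDC)
    rw [show ({v, a} : Finset V) \ C = {v} by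
      ext x; simp only [mem_sdiff, mem_insert, mem_singleton]; grind] at this
    exact hcut v _ this
  have haD : a ∉ D := Finset.disjoint_right.1 hD.disjoint (by simp)
  exact absurd (hmin a D hva.ne' (hDC.trans hCQ) hD)
    (not_le.2 (card_lt_card ⟨hDC, fun h => haD (h haC)⟩))

/-- A fragment `S` of `G - v - a - b` avoiding `c` lies in `C`, else `S \ C` would be a fragment
of `G - v - a`; then it is a fragment of `G - v - b`, as `a` has no neighbour in `C`. -/
theorem forall_not_isFragment_triple {v a b c : V} {C : Finset V}
    (ha : ∀ D, ¬G.IsFragment {v, a} D) (hb : ∀ D, ¬G.IsFragment {v, b} D)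
    (hC : G.IsFragment {v, c} C) (hbC : b ∈ C) (haC : a ∉ C) (hac : a ≠ c) (hav : a ≠ v) :
    ∀ S, ¬G.IsFragment {v, a, b} S := by
  intro S hS
  obtain ⟨S, hS, hcS⟩ := hS.exists_isFragment_not_mem c
  have hvS : v ∉ S := Finset.disjoint_right.1 hS.disjoint (mem_insert_self _ _)
  have hvC : v ∉ C := Finset.disjoint_right.1 hC.disjoint (mem_insert_self _ _)
  have hSC : S ⊆ C := by
    by_contra hSC
    have := hS.sdiff hC (by simp [hvS, hcS]) (sdiff_nonempty.2 hSC)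
    rw [show ({v, a, b} : Finset V) \ C = {v, a} by
      ext x; simp only [mem_sdiff, mem_insert, mem_singleton]; grind] at this
    exact ha _ this
  have := hS.erase (a := a) (by simp) fun u hu hua => by
    rcases hC.mem_of_adj (hSC hu) hua with h | h
    · exact haC h
    · simp [hav, hac] at h
  rw [show ({v, a, b} : Finset V).erase a = {v, b} by
    ext x; simp only [mem_erase, mem_insert, mem_singleton]; grind] at this
  exact hb _ this

end Fragment

section Regular

variable [Fintype V] [DecidableRel G.Adj] {k : ℕ}

/-- Colour the two sides `insert w S` and `Sᶜ` of the cut vertex `w` separately (each misses a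
vertex, so is degenerate) and permute the colours of the first to agree at `w`. -/
theorem Connected.colorable_of_isFragment_singleton (hG : G.Connected)
    (hdeg : ∀ v, G.degree v ≤ k) {w : V} {S : Finset V} (hS : G.IsFragment {w} S) :
    G.Colorable k := by
  classical
  have hside : ∀ t : Finset V, t.Nonempty → t ≠ univ → ∃ c : V → Fin k, G.ProperOn c t :=
    fun t ht ht' => exists_properOn_of_degenerate t ht fun s hst hs =>
      hG.exists_card_neighborFinset_inter_lt hdeg hs
        (.inl fun h => ht' (univ_subset_iff.1 (h ▸ hst)))
  obtain ⟨x, hxS, hxw⟩ := hS.exists_not_mem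
  obtain ⟨y, hyS⟩ := hS.nonempty
  obtain ⟨c₁, hc₁⟩ := hside (insert w S) (insert_nonempty w S) fun h =>
    (mem_insert.1 (h ▸ mem_univ x)).elim (fun h => hxw (mem_singleton.2 h)) hxS
  obtain ⟨c₂, hc₂⟩ := hside Sᶜ ⟨x, mem_compl.2 hxS⟩ fun h =>
    mem_compl.1 (h ▸ mem_univ y) hyS
  set σ := Equiv.swap (c₁ w) (c₂ w)
  have hσ : σ (c₁ w) = c₂ w := Equiv.swap_apply_left _ _
  have hcross : ∀ ⦃u v⦄, u ∈ S → v ∉ S → G.Adj u v → σ (c₁ u) ≠ c₂ v := fun u v hu hv huv => by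
    obtain rfl : v = w := mem_singleton.1 ((hS.mem_of_adj hu huv).resolve_left hv)
    rw [← hσ]
    exact σ.injective.ne (hc₁ (mem_insert_of_mem hu) (mem_insert_self _ _) huv)
  refine ProperOn.colorable (c := fun x => if x ∈ S then σ (c₁ x) else c₂ x)
    fun u _ v _ huv => ?_
  by_cases hu : u ∈ S <;> by_cases hv : v ∈ S <;> simp only [hu, hv, if_true, if_false]
  · exact σ.injective.ne (hc₁ (mem_insert_of_mem hu) (mem_insert_of_mem hv) huv)
  · exact hcross hu hv huv
  · exact (hcross hv hu huv.symm).symm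
  · exact hc₂ (mem_compl.2 hu) (mem_compl.2 hv) huv

theorem Connected.exists_adj_adj_not_adj (hG : G.Connected) (hreg : G.IsRegularOfDegree k)
    (htop : G ≠ ⊤) (v : V) : ∃ u b, G.Adj v u ∧ G.Adj u b ∧ b ≠ v ∧ ¬G.Adj v b := by
  classical
  by_contra! h
  have hv : G.IsUniversal v := by
    rw [← insert_neighborFinset_eq_univ]
    refine hG.eq_univ_of_adj_mem (insert_nonempty _ _) fun x y hx hxy => ?_
    rw [mem_insert, mem_neighborFinset] at hx ⊢
    rcases hx with rfl | hvx
    · exact .inr hxy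
    · by_cases hyv : y = v
      · exact .inl hyv
      · exact .inr (h x y hvx hxy hyv)
  refine htop (eq_top_iff_forall_isUniversal.2 fun x => ?_)
  rwa [← degree_eq_card_sub_one, hreg.degree_eq, ← hreg.degree_eq v, degree_eq_card_sub_one]

/-- If `G - v` has no cut vertex, take `a = v` and `b` at distance two from `v`. Otherwise take
`a` in a least fragment `C₁` of some `G - v - c₁` and `b` in a least fragment of some `G - v - c₂`
lying on the other side of `c₁`; a third neighbour of `v` joins `v` to `G - v - a - b`. -/
theorem Connected.exists_adj_adj_forall_not_isFragment [DecidableEq V] (hG : G.Connected)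
    (hreg : G.IsRegularOfDegree k) (hk : 3 ≤ k) (htop : G ≠ ⊤)
    (hcut : ∀ w S, ¬G.IsFragment {w} S) :
    ∃ v a b, G.Adj v a ∧ G.Adj v b ∧ ¬G.Adj a b ∧ a ≠ b ∧ ∀ S, ¬G.IsFragment {a, b} S := by
  obtain ⟨v⟩ := hG.nonempty
  by_cases hv : ∀ c C, c ≠ v → ¬G.IsFragment {v, c} C
  · obtain ⟨u, b, hvu, hub, hbv, hvb⟩ := hG.exists_adj_adj_not_adj hreg htop v
    exact ⟨u, v, b, hvu.symm, hub, hvb, hbv.symm, fun S => hv b S hbv⟩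
  push Not at hv
  obtain ⟨c₁, C₁, a, hc₁, -, hC₁, haC₁, hva, ha⟩ := exists_adj_forall_not_isFragment_pair hcut v
    univ (by obtain ⟨c, C, h₁, h₂⟩ := hv; exact ⟨c, C, h₁, subset_univ C, h₂⟩)
  obtain ⟨c₂, C₂, b, -, hC₂R, hC₂, hbC₂, hvb, hb⟩ :=
    exists_adj_forall_not_isFragment_pair hcut v (C₁ ∪ {v, c₁})ᶜ
      ⟨c₁, _, hc₁, Subset.rfl, hC₁.compl⟩
  have hbC₁ : b ∉ C₁ ∪ {v, c₁} := mem_compl.1 (hC₂R hbC₂)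
  have hab : a ≠ b := fun h => hbC₁ (mem_union_left _ (h ▸ haC₁))
  have haC₂ : a ∉ C₂ := fun h => mem_compl.1 (hC₂R h) (mem_union_left _ haC₁)
  have hac₂ : a ≠ c₂ := by
    rintro rfl
    exact ha C₂ hC₂
  obtain ⟨z, hz, hzab⟩ := exists_mem_notMem_of_card_lt_card (s := {a, b})
    (t := G.neighborFinset v)
    (by rw [card_pair hab, card_neighborFinset_eq_degree, hreg.degree_eq]; omega)
  refine ⟨v, a, b, hva, hvb, fun h => hbC₁ (mem_union.2 (hC₁.mem_of_adj haC₁ h)), hab,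
    fun S hS => ?_⟩
  obtain ⟨S, hS, hvS⟩ := hS.exists_isFragment_not_mem v
  exact forall_not_isFragment_triple ha hb hC₂ hbC₂ haC₂ hac₂ hva.ne'
    S (hS.insert hvS ((G.mem_neighborFinset v z).1 hz) hzab)

theorem exists_card_neighborFinset_inter_add_card_image_lt [DecidableEq V] {α : Type*}
    [DecidableEq α] (hdeg : ∀ v, G.degree v ≤ k) {v a b : V} (hva : G.Adj v a)
    (hvb : G.Adj v b) (hne : a ≠ b) (hab : ∀ S, ¬G.IsFragment {a, b} S) {c₀ : V → α}
    (hc₀ : c₀ a = c₀ b) {s : Finset V} (hs : Disjoint s {a, b}) (hsne : s.Nonempty) :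
    ∃ u ∈ s, #(G.neighborFinset u ∩ s) + #((G.neighborFinset u ∩ {a, b}).image c₀) < k := by
  have hcard : ∀ u, #(G.neighborFinset u ∩ s) + #(G.neighborFinset u ∩ {a, b}) =
      #(G.neighborFinset u ∩ (s ∪ {a, b})) := fun u => by
    rw [inter_union_distrib_left, card_union_of_disjoint
      (disjoint_of_subset_left inter_subset_right (disjoint_of_subset_right inter_subset_right hs))]
  have hle : ∀ u, #(G.neighborFinset u ∩ (s ∪ {a, b})) ≤ #(G.neighborFinset u) := fun u =>
    card_le_card inter_subset_left
  by_cases hvs : v ∈ s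
  · refine ⟨v, hvs, ?_⟩
    have hvab : G.neighborFinset v ∩ {a, b} = {a, b} :=
      inter_eq_right.2 (by simp [insert_subset_iff, hva, hvb])
    have h₁ := hcard v
    rw [hvab, card_pair hne] at h₁
    have h₂ : #(({a, b} : Finset V).image c₀) ≤ 1 := by simp [image_insert, hc₀]
    have h₃ := hle v
    rw [card_neighborFinset_eq_degree] at h₃
    have := hdeg v
    rw [hvab]
    omega
  · obtain ⟨u, hu, w, huw, hws, hwab⟩ :
        ∃ u ∈ s, ∃ w, G.Adj u w ∧ w ∉ s ∧ w ∉ ({a, b} : Finset V) := by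
      by_contra! h
      exact hab s ⟨hsne, hs, ⟨v, hvs, by simp [hva.ne, hvb.ne]⟩,
        fun u w hu huw => or_iff_not_imp_left.2 (h u hu w huw)⟩
    refine ⟨u, hu, ?_⟩
    calc #(G.neighborFinset u ∩ s) + #((G.neighborFinset u ∩ {a, b}).image c₀)
        ≤ #(G.neighborFinset u ∩ (s ∪ {a, b})) := hcard u ▸ Nat.add_le_add_left card_image_le _
      _ < #(G.neighborFinset u) := card_lt_card ⟨inter_subset_left, fun h =>
          (mem_union.1 (mem_inter.1 (h ((G.mem_neighborFinset u w).2 huw))).2).elim hws hwab⟩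
      _ ≤ k := (card_neighborFinset_eq_degree G u).trans_le (hdeg u)

theorem colorable_of_adj_adj_forall_not_isFragment [DecidableEq V] (hdeg : ∀ v, G.degree v ≤ k)
    {v a b : V} (hva : G.Adj v a) (hvb : G.Adj v b) (hab : ¬G.Adj a b) (hne : a ≠ b)
    (hS : ∀ S, ¬G.IsFragment {a, b} S) : G.Colorable k := by
  have hk : 0 < k := (G.degree_pos_iff_exists_adj v).2 ⟨a, hva⟩ |>.trans_le (hdeg v)
  have hP : G.ProperOn (fun _ => (⟨0, hk⟩ : Fin k)) {a, b} := fun x hx y hy hxy => by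
    simp only [mem_insert, mem_singleton] at hx hy
    rcases hx with rfl | rfl <;> rcases hy with rfl | rfl
    · exact absurd hxy G.irrefl
    · exact absurd hxy hab
    · exact absurd hxy.symm hab
    · exact absurd hxy G.irrefl
  obtain ⟨c, -, hc⟩ := hP.exists_extension {a, b}ᶜ disjoint_compl_right fun s hs hsne =>
    exists_card_neighborFinset_inter_add_card_image_lt hdeg hva hvb hne hS rfl
      (disjoint_of_subset_left hs disjoint_compl_left) hsne
  rw [union_compl] at hc
  exact hc.colorable

theorem Connected.colorable_of_isRegularOfDegree (hG : G.Connected) (hreg : G.IsRegularOfDegree k)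
    (hk : 3 ≤ k) (htop : G ≠ ⊤) : G.Colorable k := by
  classical
  have hdeg : ∀ v, G.degree v ≤ k := fun v => (hreg.degree_eq v).le
  by_cases hcut : ∃ w S, G.IsFragment {w} S
  · obtain ⟨w, S, hS⟩ := hcut
    exact hG.colorable_of_isFragment_singleton hdeg hS
  push Not at hcut
  obtain ⟨v, a, b, hva, hvb, hab, hne, hS⟩ :=
    hG.exists_adj_adj_forall_not_isFragment hreg hk htop hcut
  exact colorable_of_adj_adj_forall_not_isFragment hdeg hva hvb hab hne hS

end Regular

section SmallDegree

variable [Fintype V] [DecidableRel G.Adj]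

theorem Connected.eq_top_of_degree_le_one (hG : G.Connected) (hdeg : ∀ v, G.degree v ≤ 1) :
    G = ⊤ := by
  classical
  refine eq_top_iff_forall_isUniversal.2 fun v => ?_
  rw [← insert_neighborFinset_eq_univ]
  refine hG.eq_univ_of_adj_mem (insert_nonempty _ _) fun x y hx hxy => ?_
  rw [mem_insert, mem_neighborFinset] at hx ⊢
  rcases hx with rfl | hvx
  · exact .inr hxy
  · refine .inl (card_le_one.1 ?_ y ((G.mem_neighborFinset x y).2 hxy) v
      ((G.mem_neighborFinset x v).2 hvx.symm))
    rw [card_neighborFinset_eq_degree]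
    exact hdeg x

/-- The neighbourhood of each vertex of the copy is already filled by the copy. -/
theorem Copy.nonempty_iso_of_isRegularOfDegree {W : Type*} [Fintype W] [Nonempty W]
    {H : SimpleGraph W} [DecidableRel H.Adj] {d : ℕ} (f : Copy H G) (hH : H.IsRegularOfDegree d)
    (hG : G.Connected) (hdeg : ∀ v, G.degree v ≤ d) : Nonempty (H ≃g G) := by
  classical
  have hN : ∀ i, G.neighborFinset (f i) = (H.neighborFinset i).map f.toEmbedding := fun i =>
    (eq_of_subset_of_card_le (fun x hx => by
        obtain ⟨j, hj, rfl⟩ := mem_map.1 hx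
        exact (G.mem_neighborFinset _ _).2 (f.toHom.map_adj ((H.mem_neighborFinset _ _).1 hj)))
      (by rw [card_map, card_neighborFinset_eq_degree, card_neighborFinset_eq_degree,
        hH.degree_eq]; exact hdeg _)).symm
  have hrange : univ.map f.toEmbedding = univ :=
    hG.eq_univ_of_adj_mem univ_nonempty.map fun x y hx hxy => by
      obtain ⟨i, -, rfl⟩ := mem_map.1 hx
      have hy : y ∈ G.neighborFinset (f i) := (G.mem_neighborFinset _ _).2 hxy
      rw [hN] at hy
      obtain ⟨j, -, rfl⟩ := mem_map.1 hy
      exact mem_map_of_mem _ (mem_univ j)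
  have hsurj : Function.Surjective f := fun y => by
    obtain ⟨i, -, hi⟩ := mem_map.1 (hrange ▸ mem_univ y)
    exact ⟨i, hi⟩
  refine ⟨⟨Equiv.ofBijective f ⟨f.injective, hsurj⟩, fun {i j} => ⟨fun h => ?_, f.toHom.map_adj⟩⟩⟩
  have hj : f j ∈ G.neighborFinset (f i) := (G.mem_neighborFinset _ _).2 h
  rw [hN, mem_map] at hj
  obtain ⟨j', hj', hjj'⟩ := hj
  rw [f.injective hjj'] at hj'
  exact (H.mem_neighborFinset _ _).1 hj'

/-- A 2-regular graph is not a forest (a forest has a leaf), so it contains a copy of a cycle,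
which is then all of it. -/
theorem Connected.colorable_two_of_isRegularOfDegree_two (hG : G.Connected)
    (hreg : G.IsRegularOfDegree 2) (hodd : ¬∃ n : ℕ, Odd n ∧ Nonempty (G ≃g cycleGraph n)) :
    G.Colorable 2 := by
  obtain ⟨v⟩ := hG.nonempty
  have : Nontrivial V := by
    obtain ⟨w, hw⟩ := (G.degree_pos_iff_exists_adj v).1 (by rw [hreg.degree_eq]; omega)
    exact ⟨v, w, hw.ne⟩
  have hcyc : ¬G.IsAcyclic := fun hac => by
    obtain ⟨w, hw⟩ := (IsTree.mk hG hac).exists_vert_degree_one_of_nontrivial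
    rw [hreg.degree_eq] at hw
    omega
  obtain ⟨n, hn, ⟨f⟩⟩ : ∃ n ≥ 3, cycleGraph n ⊑ G := by
    simpa [isAcyclic_iff_free_cycleGraph, Free] using hcyc
  obtain ⟨m, rfl⟩ : ∃ m, n = m + 3 := ⟨n - 3, by omega⟩
  obtain ⟨e⟩ := f.nonempty_iso_of_isRegularOfDegree (fun _ => cycleGraph_degree_three_le) hG
    fun v => (hreg.degree_eq v).le
  rcases Nat.even_or_odd (m + 3) with heven | hodd'
  · exact (cycleGraph.bicoloring_of_even _ heven).colorable.of_hom e.symm.toHom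
  · exact absurd ⟨m + 3, hodd', ⟨e.symm⟩⟩ hodd

end SmallDegree

end SimpleGraph

open SimpleGraph

theorem brooks_standard {V : Type*} [Fintype V] (G : SimpleGraph V)
    [DecidableRel G.Adj]
    (hconn : G.Connected)
    (hnotcomplete : G ≠ ⊤)
    (hnotoddcycle : ¬ ∃ n : ℕ, Odd n ∧ Nonempty (G ≃g cycleGraph n)) :
    G.chromaticNumber ≤ (G.maxDegree : ℕ∞) := by
  refine Colorable.chromaticNumber_le ?_
  have hdeg : ∀ v, G.degree v ≤ G.maxDegree := G.degree_le_maxDegree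
  by_cases hlow : ∃ v, G.degree v < G.maxDegree
  · obtain ⟨v, hv⟩ := hlow
    exact hconn.colorable_of_degree_lt hdeg hv
  have hreg : G.IsRegularOfDegree G.maxDegree := fun v =>
    (hdeg v).antisymm (not_lt.1 fun h => hlow ⟨v, h⟩)
  rcases (show G.maxDegree ≤ 1 ∨ G.maxDegree = 2 ∨ 3 ≤ G.maxDegree by omega) with h | h | h
  · exact absurd (hconn.eq_top_of_degree_le_one fun v => (hdeg v).trans h) hnotcomplete
  · rw [h] at hreg ⊢
    exact hconn.colorable_two_of_isRegularOfDegree_two hreg hnotoddcycle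
  · exact hconn.colorable_of_isRegularOfDegree hreg h hnotcomplete
end

section
/- Let G be a graph with maximum degree Δ ≥ 3 and suppose G contains an induced subgraph D isomorphic to K_{Δ+1} minus an edge xy, where x, y are the nonadjacent pair in D. If G − D admits a proper Δ-coloring, then G admits a proper Δ-coloring. -/
/-!
Put `t = s \ {x, y}`. Each vertex of `t` already has `Δ` neighbours inside `s`, so it has none
outside, while `x` and `y` have `Δ - 1` neighbours in `t` and hence at most one neighbour each
outside `s`. Those two outside neighbours use at most two of the `Δ ≥ 3` colours of `G - D`, so a
third colour `c` is free for both `x` and `y`, which are not adjacent; the `Δ - 1` remaining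
colours go bijectively to the clique `t`.
-/

open SimpleGraph

section

variable {V α : Type*}

theorem Finset.exists_forall_apply_ne_of_card_lt [Fintype α] (g : V → α) {N : Finset V}
    (hN : N.card < Fintype.card α) : ∃ c, ∀ v ∈ N, g v ≠ c := by
  classical
  obtain ⟨c, -, hc⟩ := exists_mem_notMem_of_card_lt_card (s := N.image g) (t := univ)
    (by simpa using card_image_le.trans_lt hN)
  exact ⟨c, fun v hv hvc => hc (hvc ▸ mem_image_of_mem g hv)⟩

theorem exists_injOn_apply_eq_of_card_le [Fintype α] {u : Finset V} {a b : V} (ha : a ∈ u)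
    (hb : b ∉ u) (c : α) (hu : u.card ≤ Fintype.card α) :
    ∃ f : V → α, Set.InjOn f u ∧ f a = c ∧ f b = c := by
  classical
  obtain ⟨e⟩ := Function.Embedding.nonempty_of_card_le (α := u) (β := α) (by simpa using hu)
  let σ := Equiv.swap (e ⟨a, ha⟩) c
  refine ⟨fun v => if h : v ∈ u then σ (e ⟨v, h⟩) else c, ?_, by simp [σ, ha], by simp [hb]⟩
  intro v hv w hw hvw
  simp only [Finset.mem_coe] at hv hw
  simp only [hv, hw, dite_true] at hvw
  exact congrArg Subtype.val (e.injective (σ.injective hvw))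

theorem Set.InjOn.sym2_eq_of_apply_eq [DecidableEq V] {f : V → α} {s : Finset V} {x y a b : V}
    (hinj : Set.InjOn f (s.erase y)) (hx : x ∈ s.erase y) (hfxy : f x = f y) (ha : a ∈ s)
    (hb : b ∈ s) (hab : a ≠ b) (h : f a = f b) : s(a, b) = s(x, y) := by
  rw [Sym2.eq_iff]
  by_cases hay : a = y
  · subst hay
    exact Or.inr ⟨rfl, hinj (by simp [hb, hab.symm]) hx (h.symm.trans hfxy.symm)⟩
  by_cases hby : b = y
  · subst hby
    exact Or.inl ⟨hinj (by simp [ha, hab]) hx (h.trans hfxy.symm), rfl⟩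
  exact absurd (hinj (by simp [ha, hay]) (by simp [hb, hby]) h) hab

namespace SimpleGraph

variable (G : SimpleGraph V)

theorem nonempty_coloring_of_induce_compl {s : Set V} (C : (G.induce sᶜ).Coloring α) (f : V → α)
    (hf : ∀ a ∈ s, ∀ b ∈ s, G.Adj a b → f a ≠ f b)
    (hfC : ∀ a ∈ s, ∀ b (hb : b ∈ sᶜ), G.Adj a b → f a ≠ C ⟨b, hb⟩) :
    Nonempty (G.Coloring α) := by
  classical
  refine ⟨Coloring.mk (fun v => if h : v ∈ s then f v else C ⟨v, h⟩) fun {a b} hab => ?_⟩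
  by_cases ha : a ∈ s <;> by_cases hb : b ∈ s <;> simp only [ha, hb, dite_true, dite_false]
  · exact hf a ha b hb hab
  · exact hfC a ha b hb hab
  · exact (hfC b hb a ha hab.symm).symm
  · exact C.valid hab

theorem exists_adj_ne_on_of_card_le_succ [Fintype α] [DecidableEq V] {s : Finset V} {x y : V}
    (hx : x ∈ s) (hy : y ∈ s) (hxy : x ≠ y) (hnadj : ¬ G.Adj x y)
    (hs : s.card ≤ Fintype.card α + 1) (c : α) :
    ∃ f : V → α, f x = c ∧ f y = c ∧ ∀ a ∈ s, ∀ b ∈ s, G.Adj a b → f a ≠ f b := by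
  have hx' : x ∈ s.erase y := s.mem_erase.2 ⟨hxy, hx⟩
  obtain ⟨f, hinj, hfx, hfy⟩ := exists_injOn_apply_eq_of_card_le hx' (s.notMem_erase y) c
    (by rw [Finset.card_erase_of_mem hy]; omega)
  refine ⟨f, hfx, hfy, fun a ha b hb hab hf => hnadj ?_⟩
  rwa [← mem_edgeSet, ← hinj.sym2_eq_of_apply_eq hx' (hfx.trans hfy.symm) ha hb hab.ne hf,
    mem_edgeSet]

variable [Fintype V] [DecidableRel G.Adj] [DecidableEq V]

theorem card_neighborFinset_sdiff_add_card_le {s u : Finset V} {v : V} (hus : u ⊆ s)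
    (hadj : ∀ w ∈ u, G.Adj v w) : (G.neighborFinset v \ s).card + u.card ≤ G.maxDegree := by
  have hu : u ⊆ G.neighborFinset v ∩ s := fun w hw =>
    Finset.mem_inter.2 ⟨(G.mem_neighborFinset v w).2 (hadj w hw), hus hw⟩
  calc (G.neighborFinset v \ s).card + u.card
      ≤ (G.neighborFinset v \ s).card + (G.neighborFinset v ∩ s).card := by gcongr
    _ = G.degree v := by
      rw [add_comm, Finset.card_inter_add_card_sdiff, card_neighborFinset_eq_degree]
    _ ≤ G.maxDegree := G.degree_le_maxDegree v

theorem neighborFinset_subset_of_forall_adj {s : Finset V} {v : V}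
    (hcard : s.card = G.maxDegree + 1) (hv : v ∈ s) (hadj : ∀ w ∈ s, w ≠ v → G.Adj v w) :
    G.neighborFinset v ⊆ s := by
  have h := G.card_neighborFinset_sdiff_add_card_le (s.erase_subset v) fun w hw =>
    hadj w (Finset.mem_of_mem_erase hw) (Finset.ne_of_mem_erase hw)
  rw [Finset.card_erase_of_mem hv, hcard, Nat.add_sub_cancel, add_le_iff_nonpos_left,
    Nat.le_zero, Finset.card_eq_zero, Finset.sdiff_eq_empty_iff_subset] at h
  exact h

theorem card_neighborFinset_sdiff_le_one {s : Finset V} {v y : V}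
    (hcard : s.card = G.maxDegree + 1) (hv : v ∈ s) (hy : y ∈ s) (hvy : v ≠ y)
    (hadj : ∀ w ∈ s, w ≠ v → w ≠ y → G.Adj v w) : (G.neighborFinset v \ s).card ≤ 1 := by
  have h := G.card_neighborFinset_sdiff_add_card_le
    ((Finset.erase_subset y _).trans (s.erase_subset v)) fun w hw => by
      simp only [Finset.mem_erase] at hw
      exact hadj w hw.2.2 hw.2.1 hw.1
  rw [Finset.card_erase_of_mem (s.mem_erase.2 ⟨hvy.symm, hy⟩), Finset.card_erase_of_mem hv,
    hcard] at h
  omega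

end SimpleGraph

end

theorem extend_coloring_almost_clique {V : Type*} [Fintype V] [DecidableEq V]
    (G : SimpleGraph V) [DecidableRel G.Adj] (Δ : ℕ)
    (hΔ : G.maxDegree = Δ) (hΔ3 : 3 ≤ Δ)
    (s : Finset V) (hcard : s.card = Δ + 1)
    (x y : V) (hx : x ∈ s) (hy : y ∈ s) (hxy : x ≠ y)
    (hnadj : ¬ G.Adj x y)
    (hadj : ∀ a ∈ s, ∀ b ∈ s, a ≠ b →
      ¬ (a = x ∧ b = y) → ¬ (a = y ∧ b = x) → G.Adj a b)
    (hcol : (G.induce ((↑s : Set V)ᶜ)).Colorable Δ) :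
    G.Colorable Δ := by
  obtain ⟨C⟩ := hcol
  rw [← hΔ] at hcard
  have hxN := G.card_neighborFinset_sdiff_le_one hcard hx hy hxy fun w hw hwx hwy =>
    hadj x hx w hw hwx.symm (fun h => hwy h.2) (fun h => hxy h.1)
  have hyN := G.card_neighborFinset_sdiff_le_one hcard hy hx hxy.symm fun w hw hwy hwx =>
    hadj y hy w hw hwy.symm (fun h => hxy h.1.symm) (fun h => hwx h.2)
  have hinner : ∀ a ∈ s, a ≠ x → a ≠ y → G.neighborFinset a ⊆ s := fun a ha hax hay =>
    G.neighborFinset_subset_of_forall_adj hcard ha fun w hw hwa =>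
      hadj a ha w hw hwa.symm (fun h => hax h.1) (fun h => hay h.1)
  let N := ((G.neighborFinset x ∪ G.neighborFinset y) \ s).subtype (· ∈ (↑s : Set V)ᶜ)
  obtain ⟨c, hc⟩ := Finset.exists_forall_apply_ne_of_card_lt C (N := N) <| calc
    N.card ≤ ((G.neighborFinset x ∪ G.neighborFinset y) \ s).card := by
      simpa only [N, Finset.card_subtype] using Finset.card_filter_le _ _
    _ ≤ (G.neighborFinset x \ s).card + (G.neighborFinset y \ s).card := by
      rw [Finset.union_sdiff_distrib]
      exact Finset.card_union_le _ _
    _ < Fintype.card (Fin Δ) := by rw [Fintype.card_fin]; omega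
  obtain ⟨f, hfx, hfy, hf⟩ :=
    G.exists_adj_ne_on_of_card_le_succ hx hy hxy hnadj (by simp [hcard, hΔ]) c
  refine G.nonempty_coloring_of_induce_compl C f hf fun a ha b hb hab => ?_
  obtain rfl | rfl : a = x ∨ a = y := by
    by_contra! h
    exact hb (hinner a ha h.1 h.2 ((G.mem_neighborFinset a b).2 hab))
  · exact hfx ▸ (hc ⟨b, hb⟩ (by simpa [N, hab] using hb)).symm
  · exact hfy ▸ (hc ⟨b, hb⟩ (by simpa [N, hab] using hb)).symm
end

section
/- Let G be a graph with maximum degree Δ ≥ 3 and let T be an induced subgraph of G isomorphic to K_Δ. Given any proper Δ-coloring of G − T in which two distinct neighbors x, y of T receive different colors, the coloring extends to a proper Δ-coloring of G. -/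
open SimpleGraph

theorem extend_coloring_clique {V : Type*} [Fintype V] [DecidableEq V]
    (G : SimpleGraph V) [DecidableRel G.Adj] (Δ : ℕ)
    (hΔ : G.maxDegree = Δ) (hΔ3 : 3 ≤ Δ)
    (hreg : G.IsRegularOfDegree Δ)
    (s : Finset V) (hclique : G.IsNClique Δ s)
    (x y : V) (hx : x ∉ s) (hy : y ∉ s) (hxy : x ≠ y)
    (hxT : ∃ a ∈ s, G.Adj x a) (hyT : ∃ b ∈ s, G.Adj y b)
    (C : (G.induce ((↑s : Set V)ᶜ)).Coloring (Fin Δ))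
    (hCxy : C ⟨x, hx⟩ ≠ C ⟨y, hy⟩) :
    ∃ C' : G.Coloring (Fin Δ),
      ∀ (v : V) (hv : v ∈ ((↑s : Set V)ᶜ)), C' v = C ⟨v, hv⟩ := by
  classical
  -- a clique vertex has exactly one neighbor outside the clique
  have hinter : ∀ v ∈ s, G.neighborFinset v ∩ s = s.erase v := by
    intro v hv
    ext u
    simp only [Finset.mem_inter, mem_neighborFinset, Finset.mem_erase]
    constructor
    · rintro ⟨hadj, hu⟩; exact ⟨(G.ne_of_adj hadj).symm, hu⟩
    · rintro ⟨hne, hu⟩; exact ⟨hclique.1 hv hu (Ne.symm hne), hu⟩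
  have hNcard : ∀ v ∈ s, (G.neighborFinset v \ s).card = 1 := by
    intro v hv
    have h1 := Finset.card_sdiff_add_card_inter (G.neighborFinset v) s
    rw [hinter v hv, Finset.card_erase_of_mem hv, hclique.2] at h1
    have h2 : (G.neighborFinset v).card = Δ := by
      rw [card_neighborFinset_eq_degree]; exact hreg v
    omega
  have hmemc : ∀ {u : V}, u ∉ s → u ∈ ((↑s : Set V)ᶜ) := by
    intro u hu; simpa using hu
  -- forbidden colors of a clique vertex
  set F : V → Finset (Fin Δ) := fun v =>
    (G.neighborFinset v \ s).attach.image
      (fun u => C ⟨u.1, hmemc (Finset.mem_sdiff.mp u.2).2⟩) with hF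
  have hFcard : ∀ v ∈ s, (F v).card ≤ 1 := by
    intro v hv
    calc (F v).card ≤ (G.neighborFinset v \ s).attach.card := Finset.card_image_le
      _ = 1 := by rw [Finset.card_attach]; exact hNcard v hv
  have hFmem : ∀ v, ∀ c ∈ F v, ∃ u : V, ∃ h : u ∉ s,
      u ∈ G.neighborFinset v \ s ∧ c = C ⟨u, hmemc h⟩ := by
    intro v c hc
    rcases Finset.mem_image.mp hc with ⟨u, _, rfl⟩
    exact ⟨u.1, (Finset.mem_sdiff.mp u.2).2, u.2, rfl⟩
  have hFmem' : ∀ v, ∀ u : V, ∀ h : u ∉ s, u ∈ G.neighborFinset v \ s →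
      C ⟨u, hmemc h⟩ ∈ F v := by
    intro v u h hu
    exact Finset.mem_image.mpr ⟨⟨u, hu⟩, Finset.mem_attach _ _, rfl⟩
  -- allowed colors
  set t : ↥s → Finset (Fin Δ) := fun v => Finset.univ \ F v.1 with ht
  have htcard : ∀ v : ↥s, Δ - 1 ≤ (t v).card := by
    intro v
    have h1 := Finset.le_card_sdiff (F v.1) (Finset.univ : Finset (Fin Δ))
    have h2 : (Finset.univ : Finset (Fin Δ)).card = Δ := by simp
    have h3 := hFcard v.1 v.2
    show Δ - 1 ≤ (Finset.univ \ F v.1).card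
    omega
  -- x-vertex and y-vertex of the clique and their forbidden colors
  obtain ⟨a, ha, hax⟩ := hxT
  obtain ⟨b, hb, hby⟩ := hyT
  have hxNa : x ∈ G.neighborFinset a \ s :=
    Finset.mem_sdiff.mpr ⟨(mem_neighborFinset _ _ _).mpr hax.symm, hx⟩
  have hyNb : y ∈ G.neighborFinset b \ s :=
    Finset.mem_sdiff.mpr ⟨(mem_neighborFinset _ _ _).mpr hby.symm, hy⟩
  have huniq : ∀ v ∈ s, ∀ u₁ ∈ G.neighborFinset v \ s, ∀ u₂ ∈ G.neighborFinset v \ s,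
      u₁ = u₂ := by
    intro v hv u₁ h₁ u₂ h₂
    exact Finset.card_le_one.mp (le_of_eq (hNcard v hv)) u₁ h₁ u₂ h₂
  have hFa : ∀ c ∈ F a, c = C ⟨x, hx⟩ := by
    intro c hc
    obtain ⟨u, h, hu, rfl⟩ := hFmem a c hc
    have : u = x := huniq a ha u hu x hxNa
    subst this
    rfl
  have hFb : ∀ c ∈ F b, c = C ⟨y, hy⟩ := by
    intro c hc
    obtain ⟨u, h, hu, rfl⟩ := hFmem b c hc
    have : u = y := huniq b hb u hu y hyNb
    subst this
    rfl
  -- Hall's condition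
  have hcardS : Fintype.card ↥s = Δ := by rw [Fintype.card_coe, hclique.2]
  have hall : ∀ A : Finset ↥s, A.card ≤ (A.biUnion t).card := by
    intro A
    rcases A.eq_empty_or_nonempty with rfl | ⟨v, hv⟩
    · simp
    by_cases hA : A.card ≤ Δ - 1
    · calc A.card ≤ Δ - 1 := hA
        _ ≤ (t v).card := htcard v
        _ ≤ (A.biUnion t).card :=
          Finset.card_le_card (Finset.subset_biUnion_of_mem t hv)
    · -- A = univ
      have hAle : A.card ≤ Δ := hcardS ▸ Finset.card_le_univ A
      have hAeq : A = Finset.univ := Finset.eq_univ_of_card A (by omega)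
      have hsub : (Finset.univ : Finset (Fin Δ)) ⊆ A.biUnion t := by
        intro c _
        by_cases hc : c = C ⟨x, hx⟩
        · refine Finset.mem_biUnion.mpr ⟨⟨b, hb⟩, hAeq ▸ Finset.mem_univ _, ?_⟩
          rw [ht]
          refine Finset.mem_sdiff.mpr ⟨Finset.mem_univ _, fun hcb => ?_⟩
          exact hCxy (hc ▸ hFb c hcb)
        · refine Finset.mem_biUnion.mpr ⟨⟨a, ha⟩, hAeq ▸ Finset.mem_univ _, ?_⟩
          rw [ht]
          refine Finset.mem_sdiff.mpr ⟨Finset.mem_univ _, fun hca => ?_⟩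
          exact hc (hFa c hca)
      calc A.card ≤ Δ := hAle
        _ = (Finset.univ : Finset (Fin Δ)).card := by simp
        _ ≤ (A.biUnion t).card := Finset.card_le_card hsub
  obtain ⟨g, hginj, hgmem⟩ :=
    (Finset.all_card_le_biUnion_card_iff_exists_injective t).mp hall
  -- the extended coloring
  set C' : V → Fin Δ := fun v =>
    if h : v ∈ s then g ⟨v, h⟩ else C ⟨v, hmemc h⟩ with hC'
  have hout : ∀ (v : V) (h : v ∉ s), C' v = C ⟨v, hmemc h⟩ := by
    intro v h
    simp only [hC', dif_neg h]
  have hin : ∀ (v : V) (h : v ∈ s), C' v = g ⟨v, h⟩ := by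
    intro v h
    simp only [hC', dif_pos h]
  have hgood : ∀ (v : V) (hv : v ∈ s) (u : V) (hu : u ∉ s),
      G.Adj v u → g ⟨v, hv⟩ ≠ C ⟨u, hmemc hu⟩ := by
    intro v hv u hu hadj hcontra
    have hmem := hgmem ⟨v, hv⟩
    rw [ht] at hmem
    have hforb : C ⟨u, hmemc hu⟩ ∈ F v :=
      hFmem' v u hu (Finset.mem_sdiff.mpr ⟨(mem_neighborFinset _ _ _).mpr hadj, hu⟩)
    exact (Finset.mem_sdiff.mp hmem).2 (hcontra ▸ hforb)
  have hvalid : ∀ {v w : V}, G.Adj v w → C' v ≠ C' w := by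
    intro v w hvw
    by_cases hvs : v ∈ s <;> by_cases hws : w ∈ s
    · rw [hin v hvs, hin w hws]
      intro h
      exact G.ne_of_adj hvw (congrArg Subtype.val (hginj h))
    · rw [hin v hvs, hout w hws]
      exact hgood v hvs w hws hvw
    · rw [hout v hvs, hin w hws]
      exact (hgood w hws v hvs hvw.symm ·.symm)
    · rw [hout v hvs, hout w hws]
      exact C.valid (by exact hvw)
  refine ⟨SimpleGraph.Coloring.mk C' hvalid, fun v hv => ?_⟩
  have hvs : v ∉ s := by simpa using hv
  exact hout v hvs
end

section
/- Let v_1, ..., v_k be vertices each with a list of at least k−1 allowed colors, forming a clique K_k, such that not all lists are equal. Then the clique admits a proper coloring where each vertex receives a color from its list. -/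
theorem clique_list_coloring (k : ℕ) (L : Fin k → Finset ℕ)
    (hsize : ∀ i, k - 1 ≤ (L i).card)
    (hne : ¬ ∀ i j, L i = L j) :
    ∃ c : Fin k → ℕ, (∀ i, c i ∈ L i) ∧ Function.Injective c := by
  push_neg at hne
  obtain ⟨i, j, hij⟩ := hne
  -- find p, q and a color a ∈ L p \ L q
  obtain ⟨p, q, a, hap, haq⟩ :
      ∃ p q : Fin k, ∃ a, a ∈ L p ∧ a ∉ L q := by
    by_cases h : L i ⊆ L j
    · have h2 : ¬ L j ⊆ L i := fun h2 => hij (le_antisymm h h2)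
      obtain ⟨a, ha1, ha2⟩ := Finset.not_subset.1 h2
      exact ⟨j, i, a, ha1, ha2⟩
    · obtain ⟨a, ha1, ha2⟩ := Finset.not_subset.1 h
      exact ⟨i, j, a, ha1, ha2⟩
  have key : ∀ s : Finset (Fin k), s.card ≤ (s.biUnion L).card := by
    intro s
    rcases s.eq_empty_or_nonempty with rfl | ⟨i0, hi0⟩
    · simp
    have hsub : ∀ r ∈ s, L r ⊆ s.biUnion L := by
      intro r hr x hx
      exact Finset.mem_biUnion.2 ⟨r, hr, hx⟩
    by_cases hs : s.card ≤ k - 1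
    · calc s.card ≤ k - 1 := hs
        _ ≤ (L i0).card := hsize i0
        _ ≤ (s.biUnion L).card := Finset.card_le_card (hsub i0 hi0)
    · have hk0 : 0 < k := i0.pos
      have hle : s.card ≤ k := by
        simpa using Finset.card_le_card (Finset.subset_univ s)
      have hk : s.card = k := le_antisymm hle (by omega)
      have huniv : s = Finset.univ := Finset.eq_univ_of_card s (by simpa using hk)
      have hsub2 : insert a (L q) ⊆ s.biUnion L := by
        apply Finset.insert_subset
        · exact hsub p (huniv ▸ Finset.mem_univ p) hap
        · exact hsub q (huniv ▸ Finset.mem_univ q)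
      calc s.card = k := hk
        _ ≤ (L q).card + 1 := by have := hsize q; omega
        _ = (insert a (L q)).card := (Finset.card_insert_of_notMem haq).symm
        _ ≤ (s.biUnion L).card := Finset.card_le_card hsub2
  obtain ⟨f, hinj, hmem⟩ :=
    (Finset.all_card_le_biUnion_card_iff_exists_injective L).1 key
  exact ⟨f, hmem, hinj⟩
end

section
/- If G is a graph with χ(G) = Δ(G) + 1 ≥ 4 that is vertex-minimal with this property, then G does not contain K_{Δ(G)+1} minus an edge as a subgraph, unless it contains K_{Δ(G)+1}. -/
open SimpleGraph

theorem minimal_no_almost_clique {V : Type*} [Fintype V] [DecidableEq V]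
    (G : SimpleGraph V) [DecidableRel G.Adj]
    (hchi : G.chromaticNumber = (G.maxDegree + 1 : ℕ))
    (h4 : 4 ≤ G.maxDegree + 1)
    (hmin : ∀ v : V,
      (G.induce ({v}ᶜ : Set V)).chromaticNumber ≤ (G.maxDegree : ℕ∞))
    (halmost : ∃ (s : Finset V) (x y : V), s.card = G.maxDegree + 1 ∧
      x ∈ s ∧ y ∈ s ∧ x ≠ y ∧
      ∀ a ∈ s, ∀ b ∈ s, a ≠ b →
        ¬ (a = x ∧ b = y) → ¬ (a = y ∧ b = x) → G.Adj a b) :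
    ¬ G.CliqueFree (G.maxDegree + 1) := by
  classical
  intro hcf
  obtain ⟨s, x, y, hcard, hxs, hys, hxy, hadj⟩ := halmost
  set Δ := G.maxDegree with hΔdef
  have hΔ3 : 3 ≤ Δ := by omega
  have hyx : y ≠ x := hxy.symm
  -- x and y are not adjacent
  have hxyadj : ¬ G.Adj x y := by
    intro h
    refine hcf s ⟨?_, hcard⟩
    intro a ha b hb hab
    simp only [Finset.mem_coe] at ha hb
    by_cases h1 : a = x ∧ b = y
    · rw [h1.1, h1.2]; exact h
    by_cases h2 : a = y ∧ b = x
    · rw [h2.1, h2.2]; exact h.symm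
    · exact hadj a ha b hb hab h1 h2
  -- a Δ-coloring of G - x
  obtain ⟨f, hf⟩ : ∃ f : V → Fin Δ, ∀ u v, u ≠ x → v ≠ x → G.Adj u v → f u ≠ f v := by
    have hcol : (G.induce ({x}ᶜ : Set V)).Colorable Δ := by
      have := hmin x
      rwa [chromaticNumber_le_iff_colorable] at this
    obtain ⟨c⟩ := hcol
    refine ⟨fun v => if h : v = x then ⟨0, by omega⟩ else c ⟨v, by simp [h]⟩, ?_⟩
    intro u v hu hv h
    simp only [dif_neg hu, dif_neg hv]
    exact c.valid h
  -- G is not Δ-colorable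
  have hnotcol : ¬ G.Colorable Δ := by
    intro hc
    have h1 : G.chromaticNumber ≤ (Δ : ℕ∞) := hc.chromaticNumber_le
    rw [hchi] at h1
    have h2 : (Δ + 1 : ℕ) ≤ Δ := Nat.cast_le.mp h1
    omega
  -- extension principle: no proper coloring of G - x can avoid a color on N(x)
  have hext : ∀ (g : V → Fin Δ) (d : Fin Δ),
      (∀ u v, u ≠ x → v ≠ x → G.Adj u v → g u ≠ g v) →
      (∀ v, G.Adj x v → g v ≠ d) → False := by
    intro g d hg hgx
    apply hnotcol
    refine ⟨Coloring.mk (fun v => if v = x then d else g v) ?_⟩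
    intro u v huv
    by_cases hu : u = x
    · have hv : v ≠ x := fun h => G.ne_of_adj huv (hu.trans h.symm)
      simp only [if_pos hu, if_neg hv]
      exact (hgx v (hu ▸ huv)).symm
    · by_cases hv : v = x
      · simp only [if_neg hu, if_pos hv]
        exact hgx u (hv ▸ huv.symm)
      · simp only [if_neg hu, if_neg hv]
        exact hg u v hu hv huv
  -- the body of the almost-clique
  set B : Finset V := (s.erase x).erase y with hBdef
  have hBmem : ∀ b, b ∈ B ↔ b ∈ s ∧ b ≠ x ∧ b ≠ y := by
    intro b
    simp only [hBdef, Finset.mem_erase]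
    tauto
  have hyex : y ∈ s.erase x := Finset.mem_erase.mpr ⟨hyx, hys⟩
  have hBcard : B.card = Δ - 1 := by
    rw [hBdef, Finset.card_erase_of_mem hyex, Finset.card_erase_of_mem hxs, hcard]
    omega
  have hdeg : ∀ v : V, (G.neighborFinset v).card ≤ Δ := by
    intro v
    have := G.degree_le_maxDegree v
    rwa [degree] at this
  -- neighbors of vertices in B are exactly s minus themselves
  have hNB : ∀ a ∈ B, G.neighborFinset a = s.erase a := by
    intro a ha
    rw [hBmem] at ha
    have hsub : s.erase a ⊆ G.neighborFinset a := by
      intro b hb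
      rw [Finset.mem_erase] at hb
      rw [mem_neighborFinset]
      exact hadj a ha.1 b hb.2 (Ne.symm hb.1) (fun h => ha.2.1 h.1) (fun h => ha.2.2 h.1)
    have hle : (G.neighborFinset a).card ≤ (s.erase a).card := by
      rw [Finset.card_erase_of_mem ha.1, hcard]
      have := hdeg a
      omega
    exact (Finset.eq_of_subset_of_card_le hsub hle).symm
  -- f is injective on s.erase x
  have inj : ∀ u ∈ s.erase x, ∀ v ∈ s.erase x, f u = f v → u = v := by
    intro u hu v hv he
    rw [Finset.mem_erase] at hu hv
    by_contra hne
    exact hf u v hu.1 hv.1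
      (hadj u hu.2 v hv.2 hne (fun h => hu.1 h.1) (fun h => hv.1 h.2)) he
  -- the special neighbor z of x with the color of y
  obtain ⟨z, hzadj, hzc⟩ : ∃ z, G.Adj x z ∧ f z = f y := by
    by_contra h
    push_neg at h
    exact hext f (f y) hf (fun v hv => h v hv)
  have hzx : z ≠ x := (G.ne_of_adj hzadj).symm
  have hzs : z ∉ s := by
    intro hzs
    have : z = y := inj z (Finset.mem_erase.mpr ⟨hzx, hzs⟩) y hyex hzc
    rw [this] at hzadj
    exact hxyadj hzadj
  have hzB : z ∉ B := fun h => hzs ((hBmem z).mp h).1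
  -- neighbors of x are exactly B and z
  have hNx : G.neighborFinset x = insert z B := by
    have hsub : insert z B ⊆ G.neighborFinset x := by
      intro b hb
      rw [Finset.mem_insert] at hb
      rw [mem_neighborFinset]
      rcases hb with rfl | hb
      · exact hzadj
      · rw [hBmem] at hb
        exact hadj x hxs b hb.1 (Ne.symm hb.2.1) (fun h => hb.2.2 h.2) (fun h => hxy h.1)
    have hle : (G.neighborFinset x).card ≤ (insert z B).card := by
      rw [Finset.card_insert_of_notMem hzB, hBcard]
      have := hdeg x
      omega
    exact (Finset.eq_of_subset_of_card_le hsub hle).symm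
  -- key claim via Kempe chains: for every a in B, y has a neighbor outside s
  -- with the color of a
  have claim : ∀ a ∈ B, ∃ w, w ∉ s ∧ G.Adj y w ∧ f w = f a := by
    intro a ha
    have haB := (hBmem a).mp ha
    have haex : a ∈ s.erase x := Finset.mem_erase.mpr ⟨haB.2.1, haB.1⟩
    have hαβ : f a ≠ f y := fun h => haB.2.2 (inj a haex y hyex h)
    set R' : V → V → Prop :=
      fun u v => G.Adj u v ∧ v ≠ x ∧ v ≠ a ∧ (f v = f a ∨ f v = f y) with hR'def
    have hC : ∀ v, Relation.ReflTransGen R' z v →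
        v ≠ x ∧ v ≠ a ∧ (f v = f a ∨ f v = f y) := by
      intro v hv
      rcases hv.cases_tail with rfl | ⟨u, _, hu⟩
      · exact ⟨hzx, fun h => hzs (h ▸ haB.1), Or.inr hzc⟩
      · exact hu.2
    by_cases hy : Relation.ReflTransGen R' z y
    · rcases hy.cases_tail with h | ⟨q, hzq, hq⟩
      · exact absurd (h ▸ hys) hzs
      · have hqp := hC q hzq
        have hqy : G.Adj q y := hq.1
        have hfq : f q ≠ f y := hf q y hqp.1 hyx hqy
        have hfqa : f q = f a := hqp.2.2.resolve_right hfq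
        refine ⟨q, ?_, hqy.symm, hfqa⟩
        intro hqs
        exact hqp.2.1 (inj q (Finset.mem_erase.mpr ⟨hqp.1, hqs⟩) a haex hfqa)
    · exfalso
      set F : V → Fin Δ := fun v =>
        if Relation.ReflTransGen R' z v then (if f v = f a then f y else f a) else f v
        with hFdef
      have hFnot : ∀ v, ¬ Relation.ReflTransGen R' z v → F v = f v := by
        intro v h
        simp only [hFdef, if_neg h]
      have key1 : ∀ u v, v ≠ x → G.Adj u v → Relation.ReflTransGen R' z u →
          ¬ Relation.ReflTransGen R' z v → F u ≠ F v := by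
        intro u v hvx huv hu hv
        obtain ⟨hux, hua, hucol⟩ := hC u hu
        by_cases hvcol : f v = f a ∨ f v = f y
        · exfalso
          have hva : v = a := by
            by_contra hva
            exact hv (hu.tail ⟨huv, hvx, hva, hvcol⟩)
          subst hva
          have hus : u ∈ s.erase v := by
            rw [← hNB v ha, mem_neighborFinset]
            exact huv.symm
          have husx : u ∈ s.erase x := Finset.mem_erase.mpr ⟨hux, (Finset.mem_erase.mp hus).2⟩
          rcases hucol with h | h
          · exact hua (inj u husx v haex h)
          · exact hy ((inj u husx y hyex h) ▸ hu)
        · rw [hFnot v hv]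
          simp only [hFdef, if_pos hu]
          by_cases h : f u = f a
          · rw [if_pos h]
            exact fun he => hvcol (Or.inr he.symm)
          · rw [if_neg h]
            exact fun he => hvcol (Or.inl he.symm)
      have key : ∀ u v, u ≠ x → v ≠ x → G.Adj u v → F u ≠ F v := by
        intro u v hux hvx huv
        by_cases hu : Relation.ReflTransGen R' z u
        · by_cases hv : Relation.ReflTransGen R' z v
          · have hfuv := hf u v hux hvx huv
            simp only [hFdef, if_pos hu, if_pos hv]
            rcases (hC u hu).2.2 with h1 | h1 <;> rcases (hC v hv).2.2 with h2 | h2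
            · exact absurd (h1.trans h2.symm) hfuv
            · rw [if_pos h1, if_neg (fun hh => hαβ (hh.symm.trans h2))]
              exact fun hh => hαβ hh.symm
            · rw [if_neg (fun hh => hαβ (hh.symm.trans h1)), if_pos h2]
              exact hαβ
            · exact absurd (h1.trans h2.symm) hfuv
          · exact key1 u v hvx huv hu hv
        · by_cases hv : Relation.ReflTransGen R' z v
          · exact (key1 v u hux huv.symm hv hu).symm
          · rw [hFnot u hu, hFnot v hv]
            exact hf u v hux hvx huv
      have hFx : ∀ v, G.Adj x v → F v ≠ f y := by
        intro v hv
        have hvN : v ∈ insert z B := by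
          rw [← hNx, mem_neighborFinset]
          exact hv
        rcases Finset.mem_insert.mp hvN with rfl | hvB
        · have h1 : ¬ f v = f a := by
            rw [hzc]
            exact fun h => hαβ h.symm
          simp only [hFdef, if_pos (Relation.ReflTransGen.refl), if_neg h1]
          exact hαβ
        · by_cases hva : v = a
          · subst hva
            rw [hFnot v (fun h => (hC v h).2.1 rfl)]
            exact hαβ
          · have hvB' := (hBmem v).mp hvB
            have hvex : v ∈ s.erase x := Finset.mem_erase.mpr ⟨hvB'.2.1, hvB'.1⟩
            have hcol : ¬ (f v = f a ∨ f v = f y) := by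
              rintro (h | h)
              · exact hva (inj v hvex a haex h)
              · exact hvB'.2.2 (inj v hvex y hyex h)
            rw [hFnot v (fun h => hcol (hC v h).2.2)]
            exact fun h => hcol (Or.inr h)
      exact hext F (f y) key hFx
  -- pick two distinct vertices of B and derive a degree contradiction at y
  have h2B : 1 < B.card := by
    rw [hBcard]
    omega
  obtain ⟨a, ha, a', ha', haa'⟩ := Finset.one_lt_card.mp h2B
  obtain ⟨w, hws, hwy, hwc⟩ := claim a ha
  obtain ⟨w', hw's, hw'y, hw'c⟩ := claim a' ha'
  have haex : a ∈ s.erase x :=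
    Finset.mem_erase.mpr ⟨((hBmem a).mp ha).2.1, ((hBmem a).mp ha).1⟩
  have ha'ex : a' ∈ s.erase x :=
    Finset.mem_erase.mpr ⟨((hBmem a').mp ha').2.1, ((hBmem a').mp ha').1⟩
  have hww' : w ≠ w' := by
    intro h
    apply haa'
    refine inj a haex a' ha'ex ?_
    rw [← hwc, h, hw'c]
  have hsub : insert w (insert w' B) ⊆ G.neighborFinset y := by
    intro b hb
    rw [mem_neighborFinset]
    rcases Finset.mem_insert.mp hb with rfl | hb
    · exact hwy
    rcases Finset.mem_insert.mp hb with rfl | hb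
    · exact hw'y
    · have hbB := (hBmem b).mp hb
      exact hadj y hys b hbB.1 (Ne.symm hbB.2.2) (fun h => hxy h.1.symm) (fun h => hbB.2.1 h.2)
  have hw'B : w' ∉ insert w' B → False := fun h => h (Finset.mem_insert_self _ _)
  have hcard2 : (insert w (insert w' B)).card = Δ + 1 := by
    rw [Finset.card_insert_of_notMem, Finset.card_insert_of_notMem, hBcard]
    · omega
    · exact fun h => hw's ((hBmem w').mp h).1
    · intro h
      rcases Finset.mem_insert.mp h with h | h
      · exact hww' h
      · exact hws ((hBmem w).mp h).1
  have hle := Finset.card_le_card hsub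
  rw [hcard2] at hle
  have := hdeg y
  omega
end
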